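/- arXiv:math/0702275 — 10 statements merged into one kernel-verified Lean document; each statement's English description precedes it below -/
import Mathlib

section
/- For a nonnegative integer n, the Gauss hypergeometric value F(-n, -n-z; 1-z; -1) equals 2^n · ∏_{j=1}^n (z+n+1-2j)/(z-j), as an identity of rational functions of z (valid for z not a positive integer ≤ n). Equivalently, ∑_{m=0}^n binom(n,m) ∏_{j=1}^m (z+n+1-j)/(z-j) = 2^n ∏_{j=1}^n (z+n+1-2j)/(z-j). -/
open Finset

/-- falling-factorial style product `∏_{i<k} (w - i)`. -/
private def ff (w : ℂ) : ℕ → ℂ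
  | 0 => 1
  | k+1 => ff w k * (w - k)

private lemma ff_succ (w : ℂ) (k : ℕ) : ff w (k+1) = ff w k * (w - k) := rfl

private lemma ff_congr {a b : ℂ} (h : a = b) (k : ℕ) : ff a k = ff b k := by rw [h]

private lemma ff_succ' (w : ℂ) (k : ℕ) : ff w (k+1) = w * ff (w-1) k := by
  induction k with
  | zero => simp [ff]
  | succ k ih =>
    rw [ff_succ, ih, ff_succ]
    push_cast
    ring

private lemma ff_add (w : ℂ) (a b : ℕ) : ff w (a+b) = ff w a * ff (w - a) b := by
  induction b with
  | zero => simp [ff]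
  | succ b ih =>
    rw [← Nat.add_assoc, ff_succ, ih, ff_succ]
    push_cast
    ring

private lemma ff_eq (w : ℂ) (m : ℕ) : ff w m = ∏ i ∈ range m, (w - i) := by
  induction m with
  | zero => simp [ff]
  | succ m ih => rw [ff_succ, ih, prod_range_succ]

/-- telescoping certificate -/
private noncomputable def g (n : ℕ) (z : ℂ) : ℕ → ℂ
  | 0 => 0
  | m+1 => -(n:ℂ) * ((n-1).choose m : ℂ) * ff (z + n) m * ff (z - m - 2) (n - m)

private lemma pascal_sum (n : ℕ) (b : ℕ → ℂ) :
    ∑ m ∈ range (n+2), ((n+1).choose m : ℂ) * b m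
      = ∑ m ∈ range (n+1), (n.choose m : ℂ) * (b m + b (m+1)) := by
  have h1 : ∑ m ∈ range (n+2), ((n+1).choose m : ℂ) * b m
      = (∑ m ∈ range (n+1), ((n+1).choose (m+1) : ℂ) * b (m+1)) + b 0 := by
    rw [Finset.sum_range_succ' (fun m => ((n+1).choose m : ℂ) * b m) (n+1)]
    simp
  have h2 : ∑ m ∈ range (n+2), (n.choose m : ℂ) * b m
      = (∑ m ∈ range (n+1), (n.choose (m+1) : ℂ) * b (m+1)) + b 0 := by
    rw [Finset.sum_range_succ' (fun m => (n.choose m : ℂ) * b m) (n+1)]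
    simp
  have h3 : ∑ m ∈ range (n+2), (n.choose m : ℂ) * b m
      = ∑ m ∈ range (n+1), (n.choose m : ℂ) * b m := by
    rw [Finset.sum_range_succ]
    simp [Nat.choose_succ_self]
  have h4 : ∑ m ∈ range (n+1), ((n+1).choose (m+1) : ℂ) * b (m+1)
      = ∑ m ∈ range (n+1), (n.choose m : ℂ) * b (m+1)
        + ∑ m ∈ range (n+1), (n.choose (m+1) : ℂ) * b (m+1) := by
    rw [← Finset.sum_add_distrib]
    refine Finset.sum_congr rfl fun m _ => ?_
    rw [Nat.choose_succ_succ]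
    push_cast
    ring
  have h5 : ∑ m ∈ range (n+1), (n.choose m : ℂ) * (b m + b (m+1))
      = ∑ m ∈ range (n+1), (n.choose m : ℂ) * b m
        + ∑ m ∈ range (n+1), (n.choose m : ℂ) * b (m+1) := by
    rw [← Finset.sum_add_distrib]
    exact Finset.sum_congr rfl fun m _ => by ring
  rw [h1, h4, h5]
  linear_combination h3 - h2

private lemma choose_rel1 (n m k : ℕ) (hk : n = m + k) :
    (n : ℂ) * ((n-1).choose m : ℂ) = (k : ℂ) * (n.choose m : ℂ) := by
  rcases n with _ | p
  · obtain rfl : m = 0 := by omega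
    obtain rfl : k = 0 := by omega
    simp
  · have h3 : (p+1) - m = k := by omega
    have h : (p+1) * p.choose m = (p+1).choose m * k := by
      rw [Nat.add_one_mul_choose_eq p m, Nat.choose_succ_right_eq (p+1) m, h3]
    have hc := congrArg (Nat.cast : ℕ → ℂ) h
    push_cast at hc
    rw [show p + 1 - 1 = p from rfl]
    push_cast
    linear_combination hc

private lemma choose_rel2 (p q : ℕ) :
    ((p+1) : ℂ) * (p.choose q : ℂ) = ((q+1) : ℂ) * ((p+1).choose (q+1) : ℂ) := by
  have h : (p+1) * p.choose q = (p+1).choose (q+1) * (q+1) := Nat.add_one_mul_choose_eq p q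
  have hc := congrArg (Nat.cast : ℕ → ℂ) h
  push_cast at hc
  linear_combination hc

private lemma g_top (n : ℕ) (z : ℂ) : g n z (n+1) = 0 := by
  rcases n with _ | p
  · simp [g]
  · simp [g, Nat.choose_succ_self]


private lemma perterm0 (k : ℕ) (z : ℂ) :
    ff (z - 1) (k+1) + (z + k + 1) * ff (z - 2) k
      = 2 * (z + k) * ff (z - 2) k + (-(k:ℂ)) * ff (z - 2) k := by
  rw [ff_succ' (z-1) k, ff_congr (show z - 1 - 1 = z - 2 by ring) k]
  ring

private lemma perterm1 (k : ℕ) (z : ℂ) :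
    ((k+1).choose 1 : ℂ) * ((z + k + 2) * ff (z - 2) (k+1)
        + (z + k + 2) * (z + k + 1) * ff (z - 3) k)
      = 2 * (z + k + 1) * (((k+1).choose 1 : ℂ) * ((z + k) * ff (z - 3) k))
        + (-((k:ℂ)+1) * (k.choose 1 : ℂ) * (z + k + 1) * ff (z - 3) k
            - (-((k:ℂ)+1) * (k.choose 0 : ℂ) * ff (z - 2) (k+1))) := by
  rw [ff_succ' (z-2) k, ff_congr (show z - 2 - 1 = z - 3 by ring) k]
  simp only [Nat.choose_one_right, Nat.choose_zero_right]
  push_cast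
  ring

private lemma perterm2 (s k : ℕ) (z : ℂ) :
    ((s+2+k).choose (s+2) : ℂ) *
        (ff (z + s + k + 3) (s+2) * ff (z - s - 3) (k+1)
          + ff (z + s + k + 3) (s+3) * ff (z - s - 4) k)
      = 2 * (z + s + k + 2) * (((s+2+k).choose (s+2) : ℂ) *
            (ff (z + s + k + 1) (s+2) * ff (z - s - 4) k))
        + (-((s:ℂ)+k+2) * ((s+1+k).choose (s+2) : ℂ) * ff (z + s + k + 2) (s+2) * ff (z - s - 4) k
            - (-((s:ℂ)+k+2) * ((s+1+k).choose (s+1) : ℂ) * ff (z + s + k + 2) (s+1)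
                * ff (z - s - 3) (k+1))) := by
  have hA1 : ff (z + s + k + 3) (s+2)
      = (z + s + k + 3) * ((z + s + k + 2) * ff (z + s + k + 1) s) := by
    rw [ff_succ' (z + s + k + 3) (s+1), ff_congr (show z + s + k + 3 - 1 = z + s + k + 2 by ring),
        ff_succ' (z + s + k + 2) s, ff_congr (show z + s + k + 2 - 1 = z + s + k + 1 by ring)]
  have hA2 : ff (z + s + k + 3) (s+3)
      = (z + s + k + 3) * ((z + s + k + 2) * (ff (z + s + k + 1) s * (z + s + k + 1 - s))) := by
    rw [show s+3 = (s+1)+2 from rfl]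
    rw [ff_succ' (z + s + k + 3) (s+2), ff_congr (show z + s + k + 3 - 1 = z + s + k + 2 by ring),
        ff_succ' (z + s + k + 2) (s+1), ff_congr (show z + s + k + 2 - 1 = z + s + k + 1 by ring),
        ff_succ (z + s + k + 1) s]
  have hA3 : ff (z + s + k + 1) (s+2)
      = ff (z + s + k + 1) s * (z + s + k + 1 - s) * (z + s + k + 1 - (s+1 : ℕ)) := by
    rw [ff_succ (z + s + k + 1) (s+1), ff_succ (z + s + k + 1) s]
  have hA4 : ff (z + s + k + 2) (s+2)
      = (z + s + k + 2) * (ff (z + s + k + 1) s * (z + s + k + 1 - s)) := by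
    rw [ff_succ' (z + s + k + 2) (s+1), ff_congr (show z + s + k + 2 - 1 = z + s + k + 1 by ring),
        ff_succ (z + s + k + 1) s]
  have hA5 : ff (z + s + k + 2) (s+1)
      = (z + s + k + 2) * ff (z + s + k + 1) s := by
    rw [ff_succ' (z + s + k + 2) s, ff_congr (show z + s + k + 2 - 1 = z + s + k + 1 by ring)]
  have hB1 : ff (z - s - 3) (k+1) = (z - s - 3) * ff (z - s - 4) k := by
    rw [ff_succ' (z - s - 3) k, ff_congr (show z - s - 3 - 1 = z - s - 4 by ring)]
  have hd1 : ((s:ℂ)+2+k) * ((s+1+k).choose (s+2) : ℂ) = (k : ℂ) * ((s+2+k).choose (s+2) : ℂ) := by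
    have := choose_rel1 (s+2+k) (s+2) k rfl
    rw [show s+2+k-1 = s+1+k from by omega] at this
    push_cast at this ⊢
    linear_combination this
  have hd2 : ((s:ℂ)+2+k) * ((s+1+k).choose (s+1) : ℂ)
      = ((s:ℂ)+2) * ((s+2+k).choose (s+2) : ℂ) := by
    have := choose_rel2 (s+1+k) (s+1)
    rw [show s+1+k+1 = s+2+k from by omega, show s+1+1 = s+2 from by omega] at this
    push_cast at this ⊢
    linear_combination this
  rw [hA1, hA2, hA3, hA4, hA5, hB1]
  push_cast
  linear_combination ((z + s + k + 2) * (z + k + 1) * ff (z + s + k + 1) s * ff (z - s - 4) k) * hd1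
    - ((z + s + k + 2) * (z - s - 3) * ff (z + s + k + 1) s * ff (z - s - 4) k) * hd2

private lemma ff_zero (w : ℂ) : ff w 0 = 1 := rfl
private lemma ff_one (w : ℂ) : ff w 1 = w := by
  rw [show (1:ℕ) = 0+1 from rfl, ff_succ]; simp [ff]
private lemma ff_two (w : ℂ) : ff w 2 = w * (w - 1) := by
  rw [show (2:ℕ) = 1+1 from rfl, ff_succ, ff_one]; push_cast; ring

private lemma g_zero (n : ℕ) (z : ℂ) : g n z 0 = 0 := rfl
private lemma g_succ (n : ℕ) (z : ℂ) (m : ℕ) :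
    g n z (m+1) = -(n:ℂ) * ((n-1).choose m : ℂ) * ff (z + n) m * ff (z - m - 2) (n - m) := rfl
private lemma g_one (n : ℕ) (z : ℂ) :
    g n z 1 = -(n:ℂ) * ((n-1).choose 0 : ℂ) * ff (z + n) 0 * ff (z - (0:ℕ) - 2) (n - 0) := rfl
private lemma g_two (n : ℕ) (z : ℂ) :
    g n z 2 = -(n:ℂ) * ((n-1).choose 1 : ℂ) * ff (z + n) 1 * ff (z - (1:ℕ) - 2) (n - 1) := rfl

set_option maxHeartbeats 1000000 in
private lemma key (n : ℕ) (z : ℂ) :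
    ∑ m ∈ range (n+1), (n.choose m : ℂ) * (ff (z + n) m * ff (z - m - 1) (n - m))
      = 2^n * ∏ i ∈ range n, (z + n - 1 - 2*i) := by
  induction n generalizing z with
  | zero => simp [ff]
  | succ n ih =>
    rw [show n+1+1 = n+2 from rfl,
        pascal_sum n (fun m => ff (z + (n+1 : ℕ)) m * ff (z - m - 1) ((n+1) - m))]
    have hstep : ∑ m ∈ range (n+1), (n.choose m : ℂ) *
          ((fun m => ff (z + (n+1 : ℕ)) m * ff (z - m - 1) ((n+1) - m)) m
            + (fun m => ff (z + (n+1 : ℕ)) m * ff (z - m - 1) ((n+1) - m)) (m+1))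
        = ∑ m ∈ range (n+1),
            (2*(z + n) * ((n.choose m : ℂ) * (ff (z - 1 + n) m * ff (z - 1 - m - 1) (n - m)))
              + (g n z (m+1) - g n z m)) := by
      refine Finset.sum_congr rfl fun m hm => ?_
      simp only []
      have hmn : m ≤ n := by
        have := mem_range.mp hm; omega
      obtain ⟨k, hk⟩ : ∃ k, n = m + k := ⟨n - m, by omega⟩
      rw [show n+1-m = k+1 from by omega, show n+1-(m+1) = k from by omega,
          show n-m = k from by omega]
      rcases m with _ | m
      · -- m = 0
        obtain rfl : k = n := by omega
        simp only [g_succ, g_zero]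
        rw [show k - 0 = k from rfl]
        simp only [Nat.choose_zero_right]
        have h := perterm0 k z
        push_cast at h ⊢
        ring_nf
        ring_nf at h
        simp only [ff_zero, ff_one, ff_two]
        linear_combination h
      rcases m with _ | s
      · -- m = 1
        obtain rfl : n = k + 1 := by omega
        simp only [g_succ, g_zero]
        rw [show k+1-1 = k from rfl, show k+1-0 = k+1 from rfl]
        have h := perterm1 k z
        simp only [Nat.choose_zero_right, Nat.choose_one_right] at h
        push_cast at h ⊢
        ring_nf
        ring_nf at h
        simp only [ff_zero, ff_one, ff_two, Nat.choose_zero_right, Nat.choose_one_right]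
        push_cast
        linear_combination h
      · -- m = s+2 (marker)
        subst hk
        simp only [g_succ, g_zero]
        rw [show s+1+1+k-1 = s+1+k from by omega,
            show s+1+1+k-(s+1) = k+1 from by omega,
            show s+1+1+k-(s+1+1) = k from by omega]
        have h := perterm2 s k z
        push_cast at h ⊢
        ring_nf
        ring_nf at h
        linear_combination h
    rw [hstep, Finset.sum_add_distrib, Finset.sum_range_sub (g n z), g_top, g_zero,
        ← Finset.mul_sum, ih (z - 1)]
    have hprod : ∏ i ∈ range (n+1), (z + (n+1 : ℕ) - 1 - 2*i)
        = (∏ i ∈ range n, (z - 1 + n - 1 - 2*i)) * (z + n) := by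
      rw [Finset.prod_range_succ' (fun i => (z + (n+1 : ℕ) - 1 - 2*i)) n]
      congr 1
      · exact Finset.prod_congr rfl fun i _ => by push_cast; ring
      · push_cast; ring
    rw [hprod, pow_succ]
    ring

private lemma icc_prod (f : ℕ → ℂ) (m : ℕ) : ∏ j ∈ Icc 1 m, f j = ∏ i ∈ range m, f (i+1) := by
  induction m with
  | zero => simp
  | succ m ih =>
    rw [Finset.prod_Icc_succ_top (by omega : 1 ≤ m+1), ih, prod_range_succ]

/-- For a nonnegative integer `n` and complex `z` not a positive integer `≤ n`,
`∑_{m=0}^n binom(n,m) ∏_{j=1}^m (z+n+1-j)/(z-j) = 2^n ∏_{j=1}^n (z+n+1-2j)/(z-j)`,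
i.e. `F(-n, -n-z; 1-z; -1) = 2^n ∏_{j=1}^n (z+n+1-2j)/(z-j)`. -/
theorem stmt0 (n : ℕ) (z : ℂ) (hz : ∀ j ∈ Finset.Icc 1 n, z ≠ (j : ℂ)) :
    ∑ m ∈ Finset.range (n + 1), (n.choose m : ℂ) *
        ∏ j ∈ Finset.Icc 1 m, (z + n + 1 - j) / (z - j)
      = 2 ^ n * ∏ j ∈ Finset.Icc 1 n, (z + n + 1 - 2 * j) / (z - j) := by
  have hfac : ∀ i : ℕ, i < n → z - 1 - i ≠ 0 := by
    intro i hi hcon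
    have h := hz (i+1) (by simp; omega)
    apply h
    push_cast
    linear_combination hcon
  have hterm : ∀ m : ℕ, ∏ j ∈ Icc 1 m, (z + n + 1 - j) / (z - j)
      = ff (z + n) m / ff (z - 1) m := by
    intro m
    rw [Finset.prod_div_distrib]
    congr 1
    · rw [icc_prod, ff_eq]; exact prod_congr rfl fun i _ => by push_cast; ring
    · rw [icc_prod, ff_eq]; exact prod_congr rfl fun i _ => by push_cast; ring
  have htail_ne : ∀ m, m ≤ n → ff (z - m - 1) (n - m) ≠ 0 := by
    intro m hm
    rw [ff_eq]
    refine Finset.prod_ne_zero_iff.mpr fun i hi => fun hcon => ?_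
    refine hfac (m + i) (by have := mem_range.mp hi; omega) ?_
    push_cast at hcon ⊢
    linear_combination hcon
  have hsplitn : ∀ m, m ≤ n → ff (z-1) n = ff (z-1) m * ff (z - m - 1) (n - m) := by
    intro m hm
    have h1 : m + (n - m) = n := by omega
    calc ff (z-1) n = ff (z-1) (m + (n-m)) := by rw [h1]
    _ = ff (z-1) m * ff (z-1-m) (n-m) := ff_add _ _ _
    _ = ff (z-1) m * ff (z - m - 1) (n-m) := by
        rw [ff_congr (show z-1-(m:ℂ) = z - m - 1 by ring)]
  have hden_ne : ff (z-1) n ≠ 0 := by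
    rw [ff_eq]
    exact prod_ne_zero_iff.mpr fun i hi => hfac i (mem_range.mp hi)
  calc ∑ m ∈ Finset.range (n + 1), (n.choose m : ℂ) *
        ∏ j ∈ Finset.Icc 1 m, (z + n + 1 - j) / (z - j)
      = ∑ m ∈ range (n+1), (n.choose m : ℂ) *
          ((ff (z+n) m * ff (z - m - 1) (n-m)) / ff (z-1) n) := by
        refine sum_congr rfl fun m hm => ?_
        have hmn : m ≤ n := by have := mem_range.mp hm; omega
        rw [hterm, hsplitn m hmn, mul_div_mul_right _ _ (htail_ne m hmn)]
    _ = (∑ m ∈ range (n+1), (n.choose m : ℂ) * (ff (z+n) m * ff (z - m - 1) (n-m)))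
          / ff (z-1) n := by
        rw [Finset.sum_div]; exact sum_congr rfl fun m _ => by ring
    _ = (2^n * ∏ i ∈ range n, (z + n - 1 - 2*i)) / ff (z-1) n := by rw [key]
    _ = 2 ^ n * ∏ j ∈ Finset.Icc 1 n, (z + n + 1 - 2 * j) / (z - j) := by
        rw [Finset.prod_div_distrib]
        have h1 : ∏ j ∈ Icc 1 n, (z + ↑n + 1 - 2*↑j) = ∏ i ∈ range n, (z + n - 1 - 2*i) := by
          rw [icc_prod]; exact prod_congr rfl fun i _ => by push_cast; ring
        have h2 : ∏ j ∈ Icc 1 n, (z - ↑j) = ff (z - 1) n := by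
          rw [icc_prod, ff_eq]; exact prod_congr rfl fun i _ => by push_cast; ring
        rw [h1, h2, mul_div_assoc]
end

section
/- For integers 1 ≤ j ≤ n, the identity j·binom(2j,j)·binom(n+j, n-j) = (-1)^{n-j} · 2j · ∏_{k=1, k≠j}^n (j+k)/(j-k) holds. -/
open Finset

lemma aux1 (j : ℕ) : ∀ m : ℕ, ∏ k ∈ Finset.Icc 1 m, ((j:ℚ) + k)
    = (Nat.factorial (j + m) : ℚ) / (Nat.factorial j : ℚ) := by
  intro m
  induction m with
  | zero => simp [div_self, Nat.factorial_ne_zero]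
  | succ m ih =>
    rw [Finset.prod_Icc_succ_top (by omega), ih,
      show j + (m+1) = (j+m)+1 by ring, Nat.factorial_succ]
    have h1 : (Nat.factorial j : ℚ) ≠ 0 := by positivity
    push_cast
    field_simp
    ring

lemma aux2 (j : ℕ) : ∀ d : ℕ, ∏ k ∈ Finset.Icc (j+1) (j+d), ((j:ℚ) + k)
    = (Nat.factorial (2*j + d) : ℚ) / (Nat.factorial (2*j) : ℚ) := by
  intro d
  induction d with
  | zero => rw [Finset.Icc_eq_empty (by omega)]; simp [div_self, Nat.factorial_ne_zero]
  | succ d ih =>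
    rw [show j + (d+1) = (j+d)+1 by ring, Finset.prod_Icc_succ_top (by omega), ih,
      show 2*j + (d+1) = (2*j+d)+1 by ring, Nat.factorial_succ]
    have h1 : (Nat.factorial (2*j) : ℚ) ≠ 0 := by positivity
    push_cast
    field_simp
    ring

lemma aux3 (j : ℕ) : ∀ d : ℕ, ∏ k ∈ Finset.Icc (j+1) (j+d), ((j:ℚ) - k)
    = (-1)^d * (Nat.factorial d : ℚ) := by
  intro d
  induction d with
  | zero => rw [Finset.Icc_eq_empty (by omega)]; simp
  | succ d ih =>
    rw [show j + (d+1) = (j+d)+1 by ring, Finset.prod_Icc_succ_top (by omega), ih,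
      Nat.factorial_succ]
    push_cast
    ring

lemma aux4 (b : ℕ) : ∀ a : ℕ, ∏ k ∈ Finset.Icc 1 b, ((a:ℚ) + (b:ℚ) + 1 - k)
    = (Nat.factorial (a + b) : ℚ) / (Nat.factorial a : ℚ) := by
  induction b with
  | zero => simp [div_self, Nat.factorial_ne_zero]
  | succ b ih =>
    intro a
    rw [Finset.prod_Icc_succ_top (by omega)]
    have iha := ih (a+1)
    have hcongr : ∏ k ∈ Finset.Icc 1 b, ((a:ℚ) + ((b:ℕ)+1 : ℕ) + 1 - k)
        = ∏ k ∈ Finset.Icc 1 b, (((a+1 : ℕ):ℚ) + (b:ℚ) + 1 - k) := by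
      apply Finset.prod_congr rfl
      intro k _
      push_cast
      ring
    push_cast at hcongr iha ⊢
    rw [hcongr, iha]
    have h1 : (Nat.factorial (a+1) : ℚ) ≠ 0 := by positivity
    have h2 : (Nat.factorial a : ℚ) ≠ 0 := by positivity
    rw [show a + 1 + b = (a + (b+1)) by ring]
    rw [show a + (b+1) = (a+b)+1 by ring, Nat.factorial_succ, Nat.factorial_succ]
    push_cast
    field_simp
    ring

lemma aux4' (e : ℕ) : ∏ k ∈ Finset.Icc 1 e, (((e+1 : ℕ):ℚ) - k)
    = (Nat.factorial e : ℚ) := by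
  have h := aux4 e 0
  simp only [Nat.factorial_zero, Nat.cast_one, div_one, zero_add, Nat.cast_zero] at h
  rw [← h]
  apply Finset.prod_congr rfl
  intro k _
  push_cast
  ring

/-- For `1 ≤ j ≤ n`,
`j·binom(2j,j)·binom(n+j,n-j) = (-1)^{n-j} · 2j · ∏_{k=1,k≠j}^n (j+k)/(j-k)`. -/
theorem stmt1 (n j : ℕ) (h1 : 1 ≤ j) (h2 : j ≤ n) :
    ((j : ℚ) * (Nat.choose (2 * j) j : ℚ) * (Nat.choose (n + j) (n - j) : ℚ))
      = (-1) ^ (n - j) * (2 * j) *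
          ∏ k ∈ (Finset.Icc 1 n).erase j, ((j : ℚ) + k) / ((j : ℚ) - k) := by
  obtain ⟨e, rfl⟩ : ∃ e, j = e + 1 := ⟨j - 1, by omega⟩
  obtain ⟨d, rfl⟩ : ∃ d, n = (e + 1) + d := ⟨n - (e+1), by omega⟩
  have hsplit : (Finset.Icc 1 ((e+1)+d)).erase (e+1)
      = Finset.Icc 1 e ∪ Finset.Icc ((e+1)+1) ((e+1)+d) := by
    ext x
    simp only [Finset.mem_erase, Finset.mem_Icc, Finset.mem_union]
    omega
  have hdisj : Disjoint (Finset.Icc 1 e) (Finset.Icc ((e+1)+1) ((e+1)+d)) := by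
    rw [Finset.disjoint_left]
    intro x hx hy
    simp only [Finset.mem_Icc] at hx hy
    omega
  rw [hsplit, Finset.prod_union hdisj, Finset.prod_div_distrib, Finset.prod_div_distrib,
    aux1 (e+1) e, aux2 (e+1) d, aux3 (e+1) d, aux4' e]
  simp only [show (e+1)+d - (e+1) = d by omega]
  rw [Nat.cast_choose ℚ (show e+1 ≤ 2*(e+1) by omega),
      Nat.cast_choose ℚ (show d ≤ (e+1)+d+(e+1) by omega)]
  simp only [show 2*(e+1) - (e+1) = e+1 by omega, show (e+1)+d+(e+1) - d = 2*(e+1) by omega]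
  have hf1 : (Nat.factorial (2*(e+1)) : ℚ) = (2*(e+1)) * (Nat.factorial ((e+1)+e) : ℚ) := by
    rw [show 2*(e+1) = ((e+1)+e)+1 by ring, Nat.factorial_succ]
    push_cast; ring
  have hf2 : (Nat.factorial (e+1) : ℚ) = (e+1) * (Nat.factorial e : ℚ) := by
    rw [Nat.factorial_succ]; push_cast; ring
  have hne1 : (Nat.factorial e : ℚ) ≠ 0 := by positivity
  have hne2 : (Nat.factorial d : ℚ) ≠ 0 := by positivity
  have hne3 : (Nat.factorial ((e+1)+e) : ℚ) ≠ 0 := by positivity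
  have hne4 : ((-1 : ℚ))^d ≠ 0 := by
    apply pow_ne_zero; norm_num
  have hne5 : ((e:ℚ)+1) ≠ 0 := by positivity
  rw [show (e+1)+d + (e+1) = 2*(e+1)+d by ring]
  rw [hf1, hf2]
  push_cast
  field_simp
end

section
/- Fix a nonnegative integer n and define ψ_n(x,z) = (e^{zx}/(1+e^{-2x})^n) · ∑_{m=0}^n e^{-2mx} binom(n,m) ∏_{j=1}^m (z+n+1-j)/(z-j), for real x and complex z not equal to 1,...,n. Then ψ_n satisfies the Schrödinger equation with Pöschl–Teller potential: ∂²ψ_n/∂x² + (n(n+1)/cosh²(x))·ψ_n − z²·ψ_n = 0. -/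
/-!
Since `1 + e^{-2x} = 2 e^{-x} cosh x`, we have `ψ = g / cosh^n x` with `g` a combination of the
exponentials `e^{(z+n-2m)x}`. Conjugating by `cosh^n` and using `cosh² - sinh² = 1` turns the
Pöschl–Teller operator into `g ↦ cosh·g'' - 2n sinh·g' + (n² - z²) cosh·g` (up to the factor
`cosh^{-(n+1)}`). This operator sends `e^{bx}`, `b = z+n-2m`, to
`2[(n-m)(z+n-m) e^{(b-1)x} - m(z-m) e^{(b+1)x}]`, and the recursion
`c_{m+1} (m+1)(z-m-1) = c_m (n-m)(z+n-m)` of the coefficients makes the sum telescope to zero.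
-/

open Finset

namespace PoschlTeller

noncomputable def coeff (n : ℕ) (z : ℂ) (m : ℕ) : ℂ :=
  n.choose m * ∏ j ∈ Icc 1 m, (z + n + 1 - j) / (z - j)

lemma coeff_succ_mul {n m : ℕ} {z : ℂ} (hz : z ≠ m + 1) (hm : m < n) :
    coeff n z (m + 1) * ((m + 1) * (z - (m + 1))) = coeff n z m * ((n - m) * (z + n - m)) := by
  have hchoose : (n.choose (m + 1) : ℂ) * (m + 1) = n.choose m * (n - m) := by
    rw [← Nat.cast_sub hm.le]
    exact_mod_cast Nat.choose_succ_right_eq n m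
  have hzm : z - (m + 1) ≠ 0 := sub_ne_zero.mpr hz
  rw [coeff, coeff, prod_Icc_succ_top (by omega)]
  push_cast
  field_simp
  linear_combination (∏ j ∈ Icc 1 m, (z + n + 1 - j) / (z - j)) * (z + n - m) * hchoose

lemma sum_range_succ_eq_of_shift {M : Type*} [AddCommMonoid M] {A B : ℕ → M} {n : ℕ}
    (h0 : A 0 = 0) (hn : B n = 0) (h : ∀ m < n, A (m + 1) = B m) :
    ∑ m ∈ range (n + 1), A m = ∑ m ∈ range (n + 1), B m := by
  rw [sum_range_succ', sum_range_succ, h0, hn]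
  exact congrArg (· + 0) (sum_congr rfl fun m hm => h m (mem_range.mp hm))

lemma hasDerivAt_sum_cexp (s : Finset ℕ) (c b : ℕ → ℂ) (x : ℝ) :
    HasDerivAt (fun t : ℝ => ∑ m ∈ s, c m * Complex.exp (b m * t))
      (∑ m ∈ s, c m * b m * Complex.exp (b m * x)) x := by
  refine HasDerivAt.fun_sum fun m _ => ?_
  have := (((hasDerivAt_id x).ofReal_comp).const_mul (b m)).cexp.const_mul (c m)
  simpa [mul_comm, mul_left_comm, mul_assoc] using this

lemma hasDerivAt_div_cosh_pow {f : ℝ → ℂ} {f' : ℂ} {x : ℝ} (k : ℕ)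
    (hf : HasDerivAt f f' x) :
    HasDerivAt (fun t => f t / (Real.cosh t : ℂ) ^ k)
      ((f' * Real.cosh x - k * Real.sinh x * f x) / (Real.cosh x : ℂ) ^ (k + 1)) x := by
  have hcosh : HasDerivAt (fun t : ℝ => (Real.cosh t : ℂ)) (Real.sinh x : ℂ) x :=
    (Real.hasDerivAt_cosh x).ofReal_comp
  have hc : (Real.cosh x : ℂ) ≠ 0 := Complex.ofReal_ne_zero.mpr (Real.cosh_pos x).ne'
  refine (hf.fun_div (hcosh.fun_pow k) (pow_ne_zero k hc)).congr_deriv ?_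
  rcases k with _ | k
  · field_simp; simp
  · rw [Nat.add_sub_cancel]
    field_simp
    ring

lemma schrodinger_div_cosh_pow {g g' g'' : ℝ → ℂ} (hg : ∀ x, HasDerivAt g (g' x) x)
    (hg' : ∀ x, HasDerivAt g' (g'' x) x) (n : ℕ) (z : ℂ) (x : ℝ) :
    deriv (deriv fun t => g t / (Real.cosh t : ℂ) ^ n) x
        + (n * (n + 1) / (Real.cosh x : ℂ) ^ 2) * (g x / (Real.cosh x : ℂ) ^ n)
        - z ^ 2 * (g x / (Real.cosh x : ℂ) ^ n)
      = (Real.cosh x * g'' x - 2 * n * Real.sinh x * g' x + (n ^ 2 - z ^ 2) * Real.cosh x * g x)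
          / (Real.cosh x : ℂ) ^ (n + 1) := by
  have hd : deriv (fun t => g t / (Real.cosh t : ℂ) ^ n) =
      fun t => (g' t * Real.cosh t - n * Real.sinh t * g t) / (Real.cosh t : ℂ) ^ (n + 1) :=
    funext fun t => (hasDerivAt_div_cosh_pow n (hg t)).deriv
  have hnum : HasDerivAt (fun t => g' t * Real.cosh t - n * Real.sinh t * g t)
      (g'' x * Real.cosh x + g' x * Real.sinh x
        - (n * Real.cosh x * g x + n * Real.sinh x * g' x)) x :=
    ((hg' x).mul (Real.hasDerivAt_cosh x).ofReal_comp).sub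
      (((Real.hasDerivAt_sinh x).ofReal_comp.const_mul (n : ℂ)).mul (hg x))
  rw [hd, (hasDerivAt_div_cosh_pow (n + 1) hnum).deriv]
  have hc : (Real.cosh x : ℂ) ≠ 0 := Complex.ofReal_ne_zero.mpr (Real.cosh_pos x).ne'
  have hsq : (Real.cosh x : ℂ) ^ 2 = Real.sinh x ^ 2 + 1 := by exact_mod_cast Real.cosh_sq x
  generalize (Real.cosh x : ℂ) = C at hc hsq ⊢
  generalize (Real.sinh x : ℂ) = S at hsq ⊢
  field_simp
  push_cast
  linear_combination (-n * (n + 1) * g x * C ^ (2 * n + 3)) * hsq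

lemma cosh_mul_sum_cexp_eq_zero {n : ℕ} {z : ℂ} {c : ℕ → ℂ}
    (hc : ∀ m < n, c (m + 1) * ((m + 1) * (z - (m + 1))) = c m * ((n - m) * (z + n - m)))
    (x : ℝ) :
    Real.cosh x * ∑ m ∈ range (n + 1),
          c m * (z + n - 2 * m) * (z + n - 2 * m) * Complex.exp ((z + n - 2 * m) * x)
      - 2 * n * Real.sinh x * ∑ m ∈ range (n + 1),
          c m * (z + n - 2 * m) * Complex.exp ((z + n - 2 * m) * x)
      + (n ^ 2 - z ^ 2) * Real.cosh x * ∑ m ∈ range (n + 1),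
          c m * Complex.exp ((z + n - 2 * m) * x) = 0 := by
  set A : ℕ → ℂ := fun m => c m * (m * (z - m)) * Complex.exp ((z + n - 2 * m + 1) * x)
  set B : ℕ → ℂ := fun m =>
    c m * ((n - m) * (z + n - m)) * Complex.exp ((z + n - 2 * m - 1) * x)
  have hAB : ∑ m ∈ range (n + 1), A m = ∑ m ∈ range (n + 1), B m := by
    refine sum_range_succ_eq_of_shift (by simp [A]) (by simp [B]) fun m hm => ?_
    simp only [A, B, ← hc m hm]
    push_cast
    ring_nf
  have hcosh : (Real.cosh x : ℂ) = (Complex.exp x + Complex.exp (-x)) / 2 := by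
    rw [Complex.ofReal_cosh, ← Complex.two_cosh]; ring
  have hsinh : (Real.sinh x : ℂ) = (Complex.exp x - Complex.exp (-x)) / 2 := by
    rw [Complex.ofReal_sinh, ← Complex.two_sinh]; ring
  suffices h : ∀ m,
      Real.cosh x * (c m * (z + n - 2 * m) * (z + n - 2 * m) * Complex.exp ((z + n - 2 * m) * x))
        - 2 * n * Real.sinh x * (c m * (z + n - 2 * m) * Complex.exp ((z + n - 2 * m) * x))
        + (n ^ 2 - z ^ 2) * Real.cosh x * (c m * Complex.exp ((z + n - 2 * m) * x))
      = 2 * (B m - A m) by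
    rw [mul_sum, mul_sum, mul_sum, ← sum_sub_distrib, ← sum_add_distrib,
      sum_congr rfl fun m _ => h m, ← mul_sum, sum_sub_distrib, hAB, sub_self, mul_zero]
  intro m
  simp only [A, B, hcosh, hsinh, sub_mul, add_mul, Complex.exp_sub, Complex.exp_add,
    Complex.exp_neg]
  field_simp
  ring

lemma cexp_div_one_add_cexp_pow (n m : ℕ) (z a : ℂ) (x : ℝ) :
    Complex.exp (z * x) / (1 + Complex.exp (-2 * x)) ^ n * (Complex.exp (-2 * m * x) * a)
      = a / 2 ^ n * Complex.exp ((z + n - 2 * m) * x) / (Real.cosh x : ℂ) ^ n := by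
  have hu := Complex.exp_ne_zero x
  have hcosh : (Real.cosh x : ℂ) = (Complex.exp x ^ 2 + 1) / (2 * Complex.exp x) := by
    push_cast [Complex.cosh, Complex.exp_neg]
    field_simp
  have hc : Complex.exp x ^ 2 + 1 ≠ 0 := by
    have := Complex.ofReal_ne_zero.mpr (Real.cosh_pos x).ne'
    rw [hcosh] at this
    exact (div_ne_zero_iff.mp this).1
  have hexp_neg_two : Complex.exp (-2 * x) = (Complex.exp x ^ 2)⁻¹ := by
    rw [← Complex.exp_nat_mul, ← Complex.exp_neg]; ring_nf
  have hexp_neg : Complex.exp (-2 * m * x) = (Complex.exp x ^ (2 * m))⁻¹ := by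
    rw [← Complex.exp_nat_mul, ← Complex.exp_neg]; push_cast; ring_nf
  have hexp : Complex.exp ((z + n - 2 * m) * x)
      = Complex.exp (z * x) * Complex.exp x ^ n / Complex.exp x ^ (2 * m) := by
    rw [← Complex.exp_nat_mul, ← Complex.exp_nat_mul, ← Complex.exp_add, ← Complex.exp_sub]
    push_cast; ring_nf
  rw [hexp_neg_two, hexp_neg, hexp, hcosh]
  generalize Complex.exp x = u at *
  rw [show 1 + (u ^ 2)⁻¹ = (u ^ 2 + 1) / u ^ 2 by field_simp, div_pow, div_pow, mul_pow,
    ← pow_mul]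
  field_simp
  ring

end PoschlTeller

open PoschlTeller in
/-- `ψ_n(x,z) = (e^{zx}/(1+e^{-2x})^n) ∑_{m=0}^n e^{-2mx} binom(n,m)
∏_{j=1}^m (z+n+1-j)/(z-j)` satisfies the Schrödinger equation with Pöschl–Teller potential:
`ψ'' + (n(n+1)/cosh² x)·ψ − z²·ψ = 0`. -/
theorem stmt2 (n : ℕ) (z : ℂ) (hz : ∀ j ∈ Finset.Icc 1 n, z ≠ (j : ℂ))
    (ψ : ℝ → ℂ)
    (hψ : ∀ x : ℝ, ψ x = Complex.exp (z * x) / ((1 + Complex.exp (-2 * x)) ^ n) *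
        ∑ m ∈ Finset.range (n + 1), Complex.exp (-2 * m * x) * (n.choose m : ℂ) *
          ∏ j ∈ Finset.Icc 1 m, (z + n + 1 - j) / (z - j)) :
    ∀ x : ℝ, deriv (deriv ψ) x + ((n : ℂ) * (n + 1) / (Real.cosh x : ℂ) ^ 2) * ψ x
        - z ^ 2 * ψ x = 0 := by
  set c : ℕ → ℂ := fun m => coeff n z m / 2 ^ n
  set b : ℕ → ℂ := fun m => z + n - 2 * m
  have hψ_eq : ψ = fun t : ℝ =>
      (∑ m ∈ range (n + 1), c m * Complex.exp (b m * t)) / (Real.cosh t : ℂ) ^ n := by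
    funext t
    rw [hψ, mul_sum, sum_div]
    refine sum_congr rfl fun m _ => ?_
    rw [mul_assoc (Complex.exp _)]
    exact cexp_div_one_add_cexp_pow n m z _ t
  have hc : ∀ m < n, c (m + 1) * ((m + 1) * (z - (m + 1))) = c m * ((n - m) * (z + n - m)) := by
    intro m hm
    have hcoeff := coeff_succ_mul (by exact_mod_cast hz (m + 1) (mem_Icc.mpr ⟨by omega, hm⟩)) hm
    simp only [c]
    linear_combination hcoeff / 2 ^ n
  intro x
  rw [hψ_eq, schrodinger_div_cosh_pow (hasDerivAt_sum_cexp _ c b) (hasDerivAt_sum_cexp _ _ b),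
    cosh_mul_sum_cexp_eq_zero hc, zero_div]
end

section
/- Fix a nonnegative integer n, a real x, and an integer 1 ≤ ℓ ≤ n. For the polynomial p(z) = ∑_{m=0}^n e^{-2mx} binom(n,m) ∏_{j=1}^m (z+n+1-j) ∏_{k=m+1}^n (z-k), one has p(ℓ) = (−1)^ℓ e^{−2ℓx} p(−ℓ). -/
open Finset

lemma prodIcc_mul_fact (a b : ℕ) (h : a ≤ b) :
    (∏ k ∈ Icc (a+1) b, k) * a.factorial = b.factorial := by
  induction b, h using Nat.le_induction with
  | base => simp [Icc_self]
  | succ b hb ih =>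
      rw [Finset.prod_Icc_succ_top (by omega), mul_comm _ (b+1), mul_assoc, ih,
        Nat.factorial_succ]

lemma R1 (c m : ℕ) (hc : 1 ≤ c) (hm : m ≤ c) :
    ∏ j ∈ Icc 1 m, (c - j) = ∏ v ∈ Icc (c - m) (c - 1), v := by
  refine Finset.prod_nbij' (fun j => c - j) (fun v => c - v) ?_ ?_ ?_ ?_ ?_ <;>
    (intro w hw; simp only [mem_Icc] at hw ⊢) <;> omega

lemma R2 (a b d : ℕ) (hd : d ≤ a) (hd2 : d ≤ b) :
    ∏ k ∈ Icc a b, (k - d) = ∏ v ∈ Icc (a - d) (b - d), v := by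
  refine Finset.prod_nbij' (fun k => k - d) (fun v => v + d) ?_ ?_ ?_ ?_ ?_ <;>
    (intro w hw; simp only [mem_Icc] at hw ⊢) <;> omega

lemma R3 (a b d : ℕ) :
    ∏ k ∈ Icc a b, (d + k) = ∏ v ∈ Icc (d + a) (d + b), v := by
  refine Finset.prod_nbij' (fun k => d + k) (fun v => v - d) ?_ ?_ ?_ ?_ ?_ <;>
    (intro w hw; simp only [mem_Icc] at hw ⊢) <;> omega

lemma L1 (c : ℕ) (s : Finset ℕ) (h : ∀ j ∈ s, j ≤ c) :
    ∏ j ∈ s, ((c:ℝ) - j) = ((∏ j ∈ s, (c - j) : ℕ) : ℝ) := by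
  rw [Nat.cast_prod]
  exact Finset.prod_congr rfl fun j hj => by
    rw [Nat.cast_sub (h j hj)]

lemma L2 (d : ℕ) (s : Finset ℕ) (h : ∀ k ∈ s, d ≤ k) :
    ∏ k ∈ s, ((d:ℝ) - k) = (-1)^s.card * ((∏ k ∈ s, (k - d) : ℕ) : ℝ) := by
  rw [Nat.cast_prod, ← Finset.prod_const, ← Finset.prod_mul_distrib]
  exact Finset.prod_congr rfl fun k hk => by
    rw [Nat.cast_sub (h k hk)]; ring

lemma L3 (d : ℕ) (s : Finset ℕ) :
    ∏ k ∈ s, (-(d:ℝ) - k) = (-1)^s.card * ((∏ k ∈ s, (d + k) : ℕ) : ℝ) := by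
  rw [Nat.cast_prod, ← Finset.prod_const, ← Finset.prod_mul_distrib]
  exact Finset.prod_congr rfl fun k hk => by push_cast; ring

lemma keyNat (n ℓ m' : ℕ) (h2 : ℓ ≤ n) (hm : m' ≤ n - ℓ) :
    n.choose (ℓ + m') * (∏ v ∈ Icc (n - m' + 1) (n + ℓ), v) * (∏ v ∈ Icc (m' + 1) (n - ℓ), v)
    = n.choose m' * (∏ v ∈ Icc (n - ℓ - m' + 1) (n - ℓ), v) * (∏ v ∈ Icc (ℓ + m' + 1) (n + ℓ), v) := by
  have e1 : n.choose (ℓ + m') * (ℓ + m').factorial * (n - ℓ - m').factorial = n.factorial := by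
    rw [show n - ℓ - m' = n - (ℓ + m') from by omega]
    exact Nat.choose_mul_factorial_mul_factorial (by omega)
  have e2 := prodIcc_mul_fact (n - m') (n + ℓ) (by omega)
  have e3 := prodIcc_mul_fact m' (n - ℓ) (by omega)
  have e4 : n.choose m' * m'.factorial * (n - m').factorial = n.factorial :=
    Nat.choose_mul_factorial_mul_factorial (by omega)
  have e5 := prodIcc_mul_fact (n - ℓ - m') (n - ℓ) (by omega)
  have e6 := prodIcc_mul_fact (ℓ + m') (n + ℓ) (by omega)
  apply Nat.eq_of_mul_eq_mul_right
    (show 0 < (ℓ + m').factorial * ((n - m').factorial * (m'.factorial * (n - ℓ - m').factorial))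
      from by positivity)
  calc n.choose (ℓ + m') * (∏ v ∈ Icc (n - m' + 1) (n + ℓ), v) * (∏ v ∈ Icc (m' + 1) (n - ℓ), v)
        * ((ℓ + m').factorial * ((n - m').factorial * (m'.factorial * (n - ℓ - m').factorial)))
      = (n.choose (ℓ + m') * (ℓ + m').factorial * (n - ℓ - m').factorial)
        * ((∏ v ∈ Icc (n - m' + 1) (n + ℓ), v) * (n - m').factorial)
        * ((∏ v ∈ Icc (m' + 1) (n - ℓ), v) * m'.factorial) := by ring
    _ = n.factorial * (n + ℓ).factorial * (n - ℓ).factorial := by rw [e1, e2, e3]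
    _ = (n.choose m' * m'.factorial * (n - m').factorial)
        * ((∏ v ∈ Icc (n - ℓ - m' + 1) (n - ℓ), v) * (n - ℓ - m').factorial)
        * ((∏ v ∈ Icc (ℓ + m' + 1) (n + ℓ), v) * (ℓ + m').factorial) := by rw [e4, e5, e6]; ring
    _ = n.choose m' * (∏ v ∈ Icc (n - ℓ - m' + 1) (n - ℓ), v) * (∏ v ∈ Icc (ℓ + m' + 1) (n + ℓ), v)
        * ((ℓ + m').factorial * ((n - m').factorial * (m'.factorial * (n - ℓ - m').factorial))) := by ring

lemma term_eq (n ℓ m' : ℕ) (x : ℝ) (h1 : 1 ≤ ℓ) (h2 : ℓ ≤ n) (hm : m' ≤ n - ℓ) :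
    Real.exp (-2 * ((ℓ + m' : ℕ) : ℝ) * x) * (n.choose (ℓ + m') : ℝ) *
      (∏ j ∈ Icc 1 (ℓ + m'), ((ℓ : ℝ) + n + 1 - j)) *
      (∏ k ∈ Icc (ℓ + m' + 1) n, ((ℓ : ℝ) - k))
    = (-1) ^ ℓ * Real.exp (-2 * (ℓ : ℝ) * x) *
      (Real.exp (-2 * (m' : ℝ) * x) * (n.choose m' : ℝ) *
       (∏ j ∈ Icc 1 m', (-(ℓ : ℝ) + n + 1 - j)) *
       (∏ k ∈ Icc (m' + 1) n, (-(ℓ : ℝ) - k))) := by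
  have P1 : ∏ j ∈ Icc 1 (ℓ + m'), ((ℓ : ℝ) + n + 1 - j)
      = ((∏ v ∈ Icc (n - m' + 1) (n + ℓ), v : ℕ) : ℝ) := by
    calc ∏ j ∈ Icc 1 (ℓ + m'), ((ℓ : ℝ) + n + 1 - j)
        = ∏ j ∈ Icc 1 (ℓ + m'), (((ℓ + n + 1 : ℕ) : ℝ) - j) := by
          apply Finset.prod_congr rfl; intro j _; push_cast; ring
      _ = ((∏ j ∈ Icc 1 (ℓ + m'), ((ℓ + n + 1) - j) : ℕ) : ℝ) :=
          L1 (ℓ + n + 1) _ (fun j hj => by simp only [mem_Icc] at hj; omega)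
      _ = _ := by
          rw [R1 (ℓ + n + 1) (ℓ + m') (by omega) (by omega),
            show (ℓ + n + 1) - (ℓ + m') = n - m' + 1 from by omega,
            show ℓ + n + 1 - 1 = n + ℓ from by omega]
  have P2 : ∏ k ∈ Icc (ℓ + m' + 1) n, ((ℓ : ℝ) - k)
      = (-1) ^ (n - (ℓ + m')) * ((∏ v ∈ Icc (m' + 1) (n - ℓ), v : ℕ) : ℝ) := by
    rw [L2 ℓ _ (fun k hk => by simp only [mem_Icc] at hk; omega),
      R2 (ℓ + m' + 1) n ℓ (by omega) h2,
      show ℓ + m' + 1 - ℓ = m' + 1 from by omega, Nat.card_Icc,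
      show n + 1 - (ℓ + m' + 1) = n - (ℓ + m') from by omega]
  have Q1 : ∏ j ∈ Icc 1 m', (-(ℓ : ℝ) + n + 1 - j)
      = ((∏ v ∈ Icc (n - ℓ - m' + 1) (n - ℓ), v : ℕ) : ℝ) := by
    calc ∏ j ∈ Icc 1 m', (-(ℓ : ℝ) + n + 1 - j)
        = ∏ j ∈ Icc 1 m', (((n + 1 - ℓ : ℕ) : ℝ) - j) := by
          apply Finset.prod_congr rfl; intro j _
          rw [Nat.cast_sub (by omega)]; push_cast; ring
      _ = ((∏ j ∈ Icc 1 m', ((n + 1 - ℓ) - j) : ℕ) : ℝ) :=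
          L1 (n + 1 - ℓ) _ (fun j hj => by simp only [mem_Icc] at hj; omega)
      _ = _ := by
          rw [R1 (n + 1 - ℓ) m' (by omega) (by omega),
            show (n + 1 - ℓ) - m' = n - ℓ - m' + 1 from by omega,
            show n + 1 - ℓ - 1 = n - ℓ from by omega]
  have Q2 : ∏ k ∈ Icc (m' + 1) n, (-(ℓ : ℝ) - k)
      = (-1) ^ (n - m') * ((∏ v ∈ Icc (ℓ + m' + 1) (ℓ + n), v : ℕ) : ℝ) := by
    rw [L3 ℓ _, R3 (m' + 1) n ℓ, show ℓ + (m' + 1) = ℓ + m' + 1 from by omega,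
      Nat.card_Icc, show n + 1 - (m' + 1) = n - m' from by omega]
  have hexp : Real.exp (-2 * ((ℓ + m' : ℕ) : ℝ) * x)
      = Real.exp (-2 * (ℓ : ℝ) * x) * Real.exp (-2 * (m' : ℝ) * x) := by
    rw [← Real.exp_add]; congr 1; push_cast; ring
  have hsign : ((-1 : ℝ)) ^ ℓ * (-1) ^ (n - m') = (-1) ^ (n - (ℓ + m')) := by
    rw [show n - m' = ℓ + (n - (ℓ + m')) from by omega, pow_add, ← mul_assoc,
      ← pow_add, Even.neg_one_pow ⟨ℓ, rfl⟩, one_mul]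
  have KR : (n.choose (ℓ + m') : ℝ) * ((∏ v ∈ Icc (n - m' + 1) (n + ℓ), v : ℕ) : ℝ)
        * ((∏ v ∈ Icc (m' + 1) (n - ℓ), v : ℕ) : ℝ)
      = (n.choose m' : ℝ) * ((∏ v ∈ Icc (n - ℓ - m' + 1) (n - ℓ), v : ℕ) : ℝ)
        * ((∏ v ∈ Icc (ℓ + m' + 1) (n + ℓ), v : ℕ) : ℝ) := by
    exact_mod_cast congrArg (Nat.cast : ℕ → ℝ) (keyNat n ℓ m' h2 hm)
  rw [P1, P2, Q1, Q2, hexp, show ℓ + n = n + ℓ from by omega]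
  linear_combination
    (Real.exp (-2 * (ℓ : ℝ) * x) * Real.exp (-2 * (m' : ℝ) * x) * (-1 : ℝ) ^ (n - (ℓ + m'))) * KR
    - (Real.exp (-2 * (ℓ : ℝ) * x) * Real.exp (-2 * (m' : ℝ) * x) * (n.choose m' : ℝ)
        * ((∏ v ∈ Icc (n - ℓ - m' + 1) (n - ℓ), v : ℕ) : ℝ)
        * ((∏ v ∈ Icc (ℓ + m' + 1) (n + ℓ), v : ℕ) : ℝ)) * hsign

/-- For the numerator polynomial
`p(z) = ∑_{m=0}^n e^{-2mx} binom(n,m) ∏_{j=1}^m (z+n+1-j) ∏_{k=m+1}^n (z-k)`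
one has `p(ℓ) = (-1)^ℓ e^{-2ℓx} p(-ℓ)` for each `1 ≤ ℓ ≤ n`. -/
theorem stmt6 (n : ℕ) (x : ℝ) (ℓ : ℕ) (h1 : 1 ≤ ℓ) (h2 : ℓ ≤ n)
    (p : ℝ → ℝ)
    (hp : ∀ z : ℝ, p z = ∑ m ∈ Finset.range (n + 1),
        Real.exp (-2 * m * x) * (n.choose m : ℝ) *
          (∏ j ∈ Finset.Icc 1 m, (z + n + 1 - j)) *
          (∏ k ∈ Finset.Icc (m + 1) n, (z - k))) :
    p ℓ = (-1) ^ ℓ * Real.exp (-2 * ℓ * x) * p (-(ℓ : ℝ)) := by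
  rw [hp, hp]
  have hL : ∑ m ∈ Finset.range (n + 1),
        Real.exp (-2 * m * x) * (n.choose m : ℝ) *
          (∏ j ∈ Finset.Icc 1 m, ((ℓ : ℝ) + n + 1 - j)) *
          (∏ k ∈ Finset.Icc (m + 1) n, ((ℓ : ℝ) - k))
      = ∑ m ∈ Finset.Ico ℓ (n + 1),
        Real.exp (-2 * m * x) * (n.choose m : ℝ) *
          (∏ j ∈ Finset.Icc 1 m, ((ℓ : ℝ) + n + 1 - j)) *
          (∏ k ∈ Finset.Icc (m + 1) n, ((ℓ : ℝ) - k)) := by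
    symm
    apply Finset.sum_subset
    · intro m hm
      simp only [mem_Ico, mem_range] at *
      omega
    · intro m hm hnot
      simp only [mem_Ico, mem_range] at hm hnot
      have hz : ∏ k ∈ Finset.Icc (m + 1) n, ((ℓ : ℝ) - k) = 0 :=
        Finset.prod_eq_zero (i := ℓ) (by simp only [mem_Icc]; omega) (by simp)
      rw [hz, mul_zero]
  have hR : ∑ m ∈ Finset.range (n + 1),
        Real.exp (-2 * m * x) * (n.choose m : ℝ) *
          (∏ j ∈ Finset.Icc 1 m, (-(ℓ : ℝ) + n + 1 - j)) *
          (∏ k ∈ Finset.Icc (m + 1) n, (-(ℓ : ℝ) - k))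
      = ∑ m ∈ Finset.range (n + 1 - ℓ),
        Real.exp (-2 * m * x) * (n.choose m : ℝ) *
          (∏ j ∈ Finset.Icc 1 m, (-(ℓ : ℝ) + n + 1 - j)) *
          (∏ k ∈ Finset.Icc (m + 1) n, (-(ℓ : ℝ) - k)) := by
    symm
    apply Finset.sum_subset (Finset.range_subset_range.mpr (by omega))
    intro m hm hnot
    simp only [mem_range] at hm hnot
    have hz : ∏ j ∈ Finset.Icc 1 m, (-(ℓ : ℝ) + n + 1 - j) = 0 :=
      Finset.prod_eq_zero (i := n + 1 - ℓ) (by simp only [mem_Icc]; omega)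
        (by rw [Nat.cast_sub (by omega)]; push_cast; ring)
    rw [hz]; ring
  rw [hL, hR, Finset.sum_Ico_eq_sum_range, Finset.mul_sum]
  apply Finset.sum_congr rfl
  intro m' hm'
  simp only [mem_range] at hm'
  exact term_eq n ℓ m' x h1 h2 (by omega)
end

section
/- Fix a nonnegative integer n. At x = 0, the matrix Z(0) = K(I − N)(I + N)^{−1}, with K = diag(1,…,n) and N_{jk} = binom(2j,j)binom(n+j,n-j)·j/(j+k), has characteristic polynomial ∏_{j=1}^n (z − (n+1−2j)); i.e., its eigenvalues are n−1, n−3, …, −(n−1). -/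
open Finset Polynomial Matrix

noncomputable def rt (n i : ℕ) : ℝ := (n:ℝ) + 1 - 2*((i:ℝ)+1)
noncomputable def phir (n m : ℕ) (w : ℝ) : ℝ := ∏ i ∈ (Finset.range n).erase m, (w - rt n i)
noncomputable def psir (n : ℕ) (w : ℝ) : ℝ := ∏ i ∈ Finset.range n, (w - rt n i)
noncomputable def Dd (n k : ℕ) : ℝ := ∏ i ∈ (Finset.range n).erase k, ((k:ℝ) - (i:ℝ))
noncomputable def Qq (n j : ℕ) : ℝ := ∏ i ∈ Finset.range n, (-(j:ℝ) - ((i:ℝ)+1))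

lemma psir_eq (n m : ℕ) (hm : m ∈ Finset.range n) (w : ℝ) :
    psir n w = (w - rt n m) * phir n m w :=
  (Finset.mul_prod_erase _ _ hm).symm

lemma rt_reflect (n i : ℕ) (hi : i ∈ Finset.range n) : rt n (n - 1 - i) = - rt n i := by
  simp only [Finset.mem_range] at hi
  unfold rt
  have h1 : ((n - 1 - i : ℕ) : ℝ) = (n:ℝ) - 1 - i := by
    push_cast [Nat.cast_sub (by omega : i ≤ n - 1), Nat.cast_sub (by omega : 1 ≤ n)]
    ring
  rw [h1]; ring

lemma psir_neg (n : ℕ) (w : ℝ) : psir n (-w) = (-1)^n * psir n w := by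
  unfold psir
  rw [← Finset.prod_range_reflect (fun i => (-w - rt n i)) n]
  rw [Finset.prod_congr rfl (fun i hi => (by rw [rt_reflect n i hi]; ring :
    -w - rt n (n - 1 - i) = (-1) * (w - rt n i)))]
  rw [Finset.prod_mul_distrib, Finset.prod_const, Finset.card_range]

lemma psir_zero (n j : ℕ) (h1 : 1 ≤ j) (h2 : j ≤ n) (hp : (n - j) % 2 = 1) :
    psir n (j:ℝ) = 0 := by
  apply Finset.prod_eq_zero (i := (n + 1 - j)/2 - 1)
  · simp only [Finset.mem_range]; omega
  · unfold rt
    have h3 : (((n + 1 - j)/2 - 1 : ℕ) : ℝ) = ((n:ℝ) + 1 - j)/2 - 1 := by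
      have e1 : (n + 1 - j) / 2 - 1 + 1 = (n+1-j)/2 := by omega
      have e2 : 2 * ((n+1-j)/2) = n + 1 - j := by omega
      have e3 : ((n + 1 - j : ℕ):ℝ) = (n:ℝ) + 1 - j := by
        push_cast [Nat.cast_sub (by omega : j ≤ n + 1)]; ring
      have := congrArg (fun x : ℕ => (x : ℝ)) e2
      push_cast at this
      rw [e3] at this
      have e4 : (((n + 1 - j)/2 - 1 : ℕ) : ℝ) = ((((n+1-j)/2 : ℕ)) : ℝ) - 1 := by
        push_cast [Nat.cast_sub (by omega : 1 ≤ (n+1-j)/2)]; ring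
      rw [e4]; push_cast at this; linarith
    rw [h3]; ring

lemma nat_prod_fact (j n : ℕ) :
    (∏ i ∈ Finset.range n, (j + i + 1)) * j.factorial = (j + n).factorial := by
  induction n with
  | zero => simp
  | succ n ih =>
    rw [Finset.prod_range_succ, mul_right_comm, ih]
    rw [show j + (n+1) = (j + n) + 1 from rfl, Nat.factorial_succ]
    ring

lemma Qq_val (n j : ℕ) : Qq n j * (j.factorial : ℝ) = (-1)^n * ((j+n).factorial : ℝ) := by
  unfold Qq
  have h : ∀ i ∈ Finset.range n, (-(j:ℝ) - ((i:ℝ)+1)) = (-1) * ((j + i + 1 : ℕ) : ℝ) := by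
    intro i _; push_cast; ring
  rw [Finset.prod_congr rfl h, Finset.prod_mul_distrib, Finset.prod_const, Finset.card_range,
    ← Nat.cast_prod, mul_assoc, ← Nat.cast_mul, nat_prod_fact]

lemma Dd_val (n k : ℕ) (hk : k < n) :
    Dd n k = (-1)^(n - 1 - k) * (k.factorial : ℝ) * ((n - 1 - k).factorial : ℝ) := by
  unfold Dd
  have hsplit : (Finset.range n).erase k = Finset.range k ∪ Finset.Ico (k+1) n := by
    ext i
    simp only [Finset.mem_erase, Finset.mem_range, Finset.mem_union, Finset.mem_Ico]
    omega
  rw [hsplit, Finset.prod_union (by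
    simp only [Finset.disjoint_left, Finset.mem_range, Finset.mem_Ico]
    omega)]
  have h1 : ∏ i ∈ Finset.range k, ((k:ℝ) - (i:ℝ)) = (k.factorial : ℝ) := by
    rw [← Finset.prod_range_reflect (fun i => (k:ℝ) - (i:ℝ)) k]
    rw [Finset.prod_congr rfl (fun i hi => (by
      simp only [Finset.mem_range] at hi
      push_cast [Nat.cast_sub (by omega : i ≤ k - 1), Nat.cast_sub (by omega : 1 ≤ k)]
      ring : (k:ℝ) - ((k - 1 - i : ℕ):ℝ) = ((i+1:ℕ) : ℝ)))]
    rw [← Nat.cast_prod, Finset.prod_range_add_one_eq_factorial]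
  have h2 : ∏ i ∈ Finset.Ico (k+1) n, ((k:ℝ) - (i:ℝ))
      = (-1)^(n - 1 - k) * ((n - 1 - k).factorial : ℝ) := by
    rw [Finset.prod_Ico_eq_prod_range]
    rw [Finset.prod_congr rfl (fun i _ => (by push_cast; ring :
      (k:ℝ) - ((k + 1 + i : ℕ):ℝ) = (-1) * ((i+1:ℕ):ℝ)))]
    rw [Finset.prod_mul_distrib, Finset.prod_const, Finset.card_range, ← Nat.cast_prod,
      Finset.prod_range_add_one_eq_factorial]
    have : n - (k+1) = n - 1 - k := by omega
    rw [this]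
  rw [h1, h2]; ring

lemma Dd_ne (n k : ℕ) (hk : k < n) : Dd n k ≠ 0 := by
  unfold Dd
  rw [Finset.prod_ne_zero_iff]
  intro i hi
  simp only [Finset.mem_erase, Finset.mem_range] at hi
  have hne : k ≠ i := fun h => hi.1 h.symm
  have : (k:ℝ) ≠ (i:ℝ) := by exact_mod_cast hne
  intro h; exact this (by linarith)

lemma Qq_ne (n j : ℕ) : Qq n j ≠ 0 := by
  unfold Qq
  rw [Finset.prod_ne_zero_iff]
  intro i _
  have : (0:ℝ) < (j:ℝ) + ((i:ℝ)+1) := by positivity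
  intro h; nlinarith

lemma choose_fact (n j : ℕ) (hj : j ≤ n) :
    (Nat.choose (2*j) j) * (Nat.choose (n+j) (n-j)) * (j.factorial * j.factorial * (n-j).factorial)
      = (n+j).factorial := by
  have h1 : Nat.choose (2*j) j * j.factorial * j.factorial = (2*j).factorial := by
    have := Nat.choose_mul_factorial_mul_factorial (by omega : j ≤ 2*j)
    rw [show 2*j - j = j by omega] at this
    linarith [this]
  have h2 : Nat.choose (n+j) (n-j) * (n-j).factorial * (2*j).factorial = (n+j).factorial := by
    have := Nat.choose_mul_factorial_mul_factorial (by omega : n - j ≤ n + j)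
    rw [show n + j - (n-j) = 2*j by omega] at this
    linarith [this]
  calc Nat.choose (2*j) j * (Nat.choose (n+j) (n-j))
        * (j.factorial * j.factorial * (n-j).factorial)
      = Nat.choose (n+j) (n-j) * (n-j).factorial
        * (Nat.choose (2*j) j * j.factorial * j.factorial) := by ring
    _ = (n+j).factorial := by rw [h1, h2]

lemma lagrange_phi (n m : ℕ) (hm : m < n) (w : ℝ) :
    phir n m w = ∑ k ∈ Finset.range n, phir n m ((k:ℝ)+1) * (Dd n k)⁻¹ *
      ∏ i ∈ (Finset.range n).erase k, (w - ((i:ℝ)+1)) := by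
  classical
  set Φ : Polynomial ℝ := ∏ i ∈ (Finset.range n).erase m, (X - C (rt n i)) with hΦ
  have hev : ∀ x : ℝ, Φ.eval x = phir n m x := by
    intro x; simp [hΦ, phir, eval_prod]
  have hmon : Φ.Monic := monic_prod_of_monic _ _ (fun i _ => monic_X_sub_C _)
  have hcard : ((Finset.range n).erase m).card = n - 1 := by
    rw [Finset.card_erase_of_mem (Finset.mem_range.mpr hm), Finset.card_range]
  have hnd : Φ.natDegree = n - 1 := by
    rw [hΦ, Polynomial.natDegree_prod_of_monic _ _ (fun i _ => monic_X_sub_C _)]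
    simp [hcard]
  have hdeg : Φ.degree < (Finset.range n).card := by
    rw [Polynomial.degree_eq_natDegree hmon.ne_zero, hnd, Finset.card_range]
    exact_mod_cast Nat.sub_lt_of_pos_le Nat.one_pos (by omega)
  have hinj : Set.InjOn (fun i : ℕ => ((i:ℝ)+1)) (Finset.range n) := by
    intro a _ b _ h
    simpa using h
  have key := Lagrange.eq_interpolate (v := fun i : ℕ => ((i:ℝ)+1)) hinj hdeg
  have := congrArg (Polynomial.eval w) key
  rw [hev] at this
  rw [this, Lagrange.interpolate_apply, Polynomial.eval_finset_sum]
  apply Finset.sum_congr rfl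
  intro k hk
  rw [Polynomial.eval_mul, Polynomial.eval_C, hev, Lagrange.basis, Polynomial.eval_prod]
  have hbd : ∀ i : ℕ, Polynomial.eval w (Lagrange.basisDivisor ((k:ℝ)+1) ((i:ℝ)+1))
      = ((k:ℝ) - (i:ℝ))⁻¹ * (w - ((i:ℝ)+1)) := by
    intro i
    unfold Lagrange.basisDivisor
    rw [Polynomial.eval_mul, Polynomial.eval_C, Polynomial.eval_sub, Polynomial.eval_X,
      Polynomial.eval_C, show ((k:ℝ)+1-((i:ℝ)+1)) = (k:ℝ)-(i:ℝ) from by ring]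
  simp only [hbd]
  rw [Finset.prod_mul_distrib, Finset.prod_inv_distrib]
  unfold Dd
  ring

-- the row identity
lemma row_id (n m i : ℕ) (hm : m < n) (hi : i < n) :
    (rt n m - ((i:ℝ)+1)) * (phir n m ((i:ℝ)+1) / Dd n i)
      + (rt n m + ((i:ℝ)+1)) * ((Nat.choose (2*(i+1)) (i+1) : ℝ)
          * (Nat.choose (n+(i+1)) (n-(i+1)) : ℝ)) * ((i:ℝ)+1)
        * (- phir n m (-((i:ℝ)+1)) / Qq n (i+1)) = 0 := by
  have hmem : m ∈ Finset.range n := Finset.mem_range.mpr hm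
  set z := rt n m with hz
  set jR : ℝ := (i:ℝ)+1 with hjR
  have hcast : jR = ((i+1 : ℕ) : ℝ) := by push_cast [hjR]; ring
  have e1 : (z - jR) * phir n m jR = - psir n jR := by
    rw [psir_eq n m hmem jR]; ring
  have e2 : (z + jR) * phir n m (-jR) = - ((-1)^n * psir n jR) := by
    have h := psir_eq n m hmem (-jR)
    rw [psir_neg] at h
    nlinarith [h]
  set cR : ℝ := (Nat.choose (2*(i+1)) (i+1) : ℝ) * (Nat.choose (n+(i+1)) (n-(i+1)) : ℝ) with hcR
  have hcpos : 0 < cR := by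
    apply mul_pos
    · exact_mod_cast Nat.choose_pos (by omega)
    · exact_mod_cast Nat.choose_pos (by omega)
  have hjpos : (0:ℝ) < jR := by rw [hjR]; positivity
  by_cases hpar : (n - (i+1)) % 2 = 1
  · -- psir vanishes
    have hz0 : psir n jR = 0 := by
      rw [hcast]; exact psir_zero n (i+1) (by omega) (by omega) hpar
    have f1 : (z - jR) * phir n m jR = 0 := by rw [e1, hz0]; ring
    have f2 : (z + jR) * phir n m (-jR) = 0 := by rw [e2, hz0]; ring
    calc (z - jR) * (phir n m jR / Dd n i) + (z + jR) * cR * jR * (- phir n m (-jR) / Qq n (i+1))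
        = ((z - jR) * phir n m jR) / Dd n i
          - ((z + jR) * phir n m (-jR)) * cR * jR / Qq n (i+1) := by ring
      _ = 0 := by rw [f1, f2]; simp
  · -- factorial identity
    have hpar2 : (n - 1 - i) % 2 = 0 := by omega
    have hQD : Qq n (i+1) = (-1)^n * cR * jR * Dd n i := by
      have hDv := Dd_val n i hi
      have hQv := Qq_val n (i+1)
      have hnat : (Nat.choose (2*(i+1)) (i+1)) * (Nat.choose (n+(i+1)) (n-(i+1)))
          * ((i+1) * i.factorial * (n-1-i).factorial * (i+1).factorial)
            = ((i+1) + n).factorial := by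
        have h := choose_fact n (i+1) (by omega)
        rw [show (i+1) * i.factorial = (i+1).factorial from (Nat.factorial_succ i).symm,
          show n - 1 - i = n - (i+1) by omega, show i+1+n = n+(i+1) by omega]
        ring_nf
        ring_nf at h
        exact h
      have hsign : ((-1:ℝ))^(n - 1 - i) = 1 := Even.neg_one_pow (Nat.even_iff.mpr hpar2)
      have hfne : ((i+1).factorial : ℝ) ≠ 0 := by positivity
      apply mul_right_cancel₀ hfne
      rw [hQv, hDv, hsign, hcast]
      push_cast [← hnat]
      ring
    have hQne := Qq_ne n (i+1)
    have hDne := Dd_ne n i hi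
    have hc0 : cR ≠ 0 := ne_of_gt hcpos
    have hj0 : jR ≠ 0 := ne_of_gt hjpos
    have hs0 : ((-1:ℝ))^n ≠ 0 := pow_ne_zero _ (by norm_num)
    calc (z - jR) * (phir n m jR / Dd n i) + (z + jR) * cR * jR * (- phir n m (-jR) / Qq n (i+1))
        = ((z - jR) * phir n m jR) / Dd n i
          - ((z + jR) * phir n m (-jR)) * cR * jR / Qq n (i+1) := by ring
      _ = (- psir n jR) / Dd n i - (- ((-1)^n * psir n jR)) * cR * jR
            / ((-1)^n * cR * jR * Dd n i) := by rw [e1, e2, hQD]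
      _ = 0 := by field_simp; ring

noncomputable def Nmat (n : ℕ) : Matrix (Fin n) (Fin n) ℝ := Matrix.of fun j k : Fin n =>
  (Nat.choose (2 * ((j : ℕ) + 1)) ((j : ℕ) + 1) : ℝ) *
    (Nat.choose (n + ((j : ℕ) + 1)) (n - ((j : ℕ) + 1)) : ℝ) *
    ((((j : ℕ) : ℝ) + 1) / ((((j : ℕ) : ℝ) + 1) + (((k : ℕ) : ℝ) + 1)))

noncomputable def Kmat (n : ℕ) : Matrix (Fin n) (Fin n) ℝ :=
  Matrix.diagonal fun i : Fin n => ((i : ℕ) : ℝ) + 1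

lemma det_A_zero (n m : ℕ) (hm : m < n) :
    Matrix.det ((rt n m) • (1 + Nmat n) - Kmat n * (1 - Nmat n)) = 0 := by
  classical
  rw [← Matrix.exists_mulVec_eq_zero_iff]
  set z := rt n m with hzdef
  refine ⟨fun k : Fin n => phir n m (((k:ℕ):ℝ)+1) / Dd n (k:ℕ), ?_, ?_⟩
  · -- nonzero at the last index
    intro h
    have hn1 : n - 1 < n := by omega
    have := congrFun h ⟨n-1, hn1⟩
    simp only [Pi.zero_apply] at this
    have hphipos : 0 < phir n m ((((n-1 : ℕ)):ℝ)+1) := by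
      apply Finset.prod_pos
      intro i hi
      simp only [Finset.mem_erase, Finset.mem_range] at hi
      have hc : (((n-1:ℕ)):ℝ) = (n:ℝ) - 1 := by
        push_cast [Nat.cast_sub (by omega : 1 ≤ n)]; ring
      rw [hc]
      unfold rt
      have : (0:ℝ) ≤ (i:ℝ) := by positivity
      linarith
    exact (div_ne_zero (ne_of_gt hphipos) (Dd_ne n (n-1) hn1)) this
  · -- the mulVec is zero
    funext i
    set jR : ℝ := ((i:ℕ):ℝ) + 1 with hjRdef
    have hin : (i:ℕ) < n := i.isLt
    set cR : ℝ := (Nat.choose (2*((i:ℕ)+1)) ((i:ℕ)+1) : ℝ)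
      * (Nat.choose (n+((i:ℕ)+1)) (n-((i:ℕ)+1)) : ℝ) with hcRdef
    have hexpand : ∀ k : Fin n,
        ((z • (1 + Nmat n) - Kmat n * (1 - Nmat n)) i k) * (phir n m (((k:ℕ):ℝ)+1) / Dd n (k:ℕ))
          = (z - jR) * (if i = k then phir n m (((k:ℕ):ℝ)+1) / Dd n (k:ℕ) else 0)
            + (z + jR) * (cR * (jR / (jR + (((k:ℕ):ℝ)+1)))
                * (phir n m (((k:ℕ):ℝ)+1) / Dd n (k:ℕ))) := by
      intro k
      by_cases h : i = k
      · subst h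
        simp only [Matrix.sub_apply, Matrix.smul_apply, Matrix.add_apply, Matrix.one_apply,
          Matrix.diagonal_mul, Kmat, Nmat, Matrix.of_apply, if_true, eq_self_iff_true,
          smul_eq_mul]
        simp only [← hcRdef, ← hjRdef]
        ring
      · simp only [Matrix.sub_apply, Matrix.smul_apply, Matrix.add_apply, Matrix.one_apply,
          Matrix.diagonal_mul, Kmat, Nmat, Matrix.of_apply, if_neg h, smul_eq_mul]
        simp only [← hcRdef, ← hjRdef]
        ring
    have hQne := Qq_ne n ((i:ℕ)+1)
    have hS : ∑ k : Fin n, (phir n m (((k:ℕ):ℝ)+1) / Dd n (k:ℕ)) * (jR + (((k:ℕ):ℝ)+1))⁻¹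
        = - phir n m (-jR) / Qq n ((i:ℕ)+1) := by
      have hL := lagrange_phi n m hm (-jR)
      have hterm : ∀ k ∈ Finset.range n,
          phir n m ((k:ℝ)+1) * (Dd n k)⁻¹ * ∏ i' ∈ (Finset.range n).erase k, (-jR - ((i':ℝ)+1))
            = Qq n ((i:ℕ)+1) * (-((phir n m ((k:ℝ)+1) / Dd n k) * (jR + ((k:ℝ)+1))⁻¹)) := by
        intro k hk
        have hsplit : Qq n ((i:ℕ)+1) = (-((((i:ℕ)+1 : ℕ)):ℝ) - ((k:ℝ)+1)) *
            ∏ i' ∈ (Finset.range n).erase k, (-((((i:ℕ)+1 : ℕ)):ℝ) - ((i':ℝ)+1)) :=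
          (Finset.mul_prod_erase _ _ hk).symm
        have hc : ((((i:ℕ)+1 : ℕ)):ℝ) = jR := by rw [hjRdef]; push_cast; ring
        rw [hc] at hsplit
        have hpos : (0:ℝ) < jR + ((k:ℝ)+1) := by rw [hjRdef]; positivity
        have hne : (-jR - ((k:ℝ)+1)) ≠ 0 := by intro hcon; nlinarith
        have hDne := Dd_ne n k (Finset.mem_range.mp hk)
        rw [hsplit]
        field_simp
        ring
      rw [Finset.sum_congr rfl hterm, ← Finset.mul_sum,
        ← Fin.sum_univ_eq_sum_range (fun kk : ℕ =>
          -((phir n m ((kk:ℝ)+1) / Dd n kk) * (jR + ((kk:ℝ)+1))⁻¹)) n] at hL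
      rw [eq_div_iff hQne]
      simp only [Finset.sum_neg_distrib] at hL
      linear_combination hL
    have hrow := row_id n m (i:ℕ) hm hin
    simp only [← hjRdef, ← hcRdef, ← hzdef] at hrow
    show ∑ k : Fin n, ((z • (1 + Nmat n) - Kmat n * (1 - Nmat n)) i k)
        * (phir n m (((k:ℕ):ℝ)+1) / Dd n (k:ℕ)) = 0
    have hexpand2 : ∀ k : Fin n,
        ((z • (1 + Nmat n) - Kmat n * (1 - Nmat n)) i k) * (phir n m (((k:ℕ):ℝ)+1) / Dd n (k:ℕ))
          = (z - jR) * (if i = k then phir n m (((k:ℕ):ℝ)+1) / Dd n (k:ℕ) else 0)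
            + ((z + jR) * cR * jR) * ((phir n m (((k:ℕ):ℝ)+1) / Dd n (k:ℕ))
                * (jR + (((k:ℕ):ℝ)+1))⁻¹) := by
      intro k
      rw [hexpand k]
      by_cases h : i = k <;> simp [h] <;> ring
    rw [Finset.sum_congr rfl (fun k _ => hexpand2 k), Finset.sum_add_distrib,
      ← Finset.mul_sum, ← Finset.mul_sum, Finset.sum_ite_eq]
    simp only [Finset.mem_univ, if_true]
    rw [hS]
    linear_combination hrow

lemma eval_charpoly' (n : ℕ) (M : Matrix (Fin n) (Fin n) ℝ) (r : ℝ) :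
    M.charpoly.eval r = (r • (1 : Matrix (Fin n) (Fin n) ℝ) - M).det := by
  rw [Matrix.charpoly, ← Polynomial.coe_evalRingHom, RingHom.map_det]
  congr 1
  ext i j
  by_cases h : i = j
  · subst h
    simp [Matrix.charmatrix_apply_eq, Matrix.one_apply, Matrix.smul_apply]
  · simp [Matrix.charmatrix_apply_ne _ _ _ h, Matrix.one_apply_ne h, Matrix.smul_apply]

lemma cauchy_nonneg (n : ℕ) (x : Fin n → ℝ) :
    0 ≤ ∑ i : Fin n, ∑ k : Fin n, x i * x k / (((i:ℕ):ℝ) + ((k:ℕ):ℝ) + 2) := by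
  have hint : ∀ i k : Fin n, x i * x k / (((i:ℕ):ℝ) + ((k:ℕ):ℝ) + 2)
      = ∫ t in (0:ℝ)..1, (x i * x k) * t^((i:ℕ)+(k:ℕ)+1) := by
    intro i k
    rw [intervalIntegral.integral_const_mul, integral_pow]
    simp only [one_pow, ne_eq, Nat.succ_ne_zero, not_false_iff, zero_pow]
    push_cast
    ring
  have hrw : (∑ i : Fin n, ∑ k : Fin n, x i * x k / (((i:ℕ):ℝ) + ((k:ℕ):ℝ) + 2))
      = ∫ t in (0:ℝ)..1, ∑ i : Fin n, ∑ k : Fin n, (x i * x k) * t^((i:ℕ)+(k:ℕ)+1) := by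
    rw [intervalIntegral.integral_finset_sum (fun i _ => ?_)]
    · exact Finset.sum_congr rfl fun i _ => by
        rw [intervalIntegral.integral_finset_sum (fun k _ =>
          Continuous.intervalIntegrable (by fun_prop :
            Continuous (fun t : ℝ => (x i * x k) * t^((i:ℕ)+(k:ℕ)+1))) _ _)]
        exact Finset.sum_congr rfl fun k _ => hint i k
    · apply Continuous.intervalIntegrable
      fun_prop
  rw [hrw]
  apply intervalIntegral.integral_nonneg (by norm_num)
  intro t ht
  have h0 : (0:ℝ) ≤ t := ht.1
  have heq : ∑ i : Fin n, ∑ k : Fin n, (x i * x k) * t^((i:ℕ)+(k:ℕ)+1)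
      = t * (∑ i : Fin n, x i * t^(i:ℕ))^2 := by
    rw [sq, Finset.sum_mul_sum, Finset.mul_sum]
    refine Finset.sum_congr rfl fun i _ => ?_
    rw [Finset.mul_sum]
    refine Finset.sum_congr rfl fun k _ => ?_
    rw [pow_add, pow_one]
    ring
  rw [heq]
  positivity

lemma isUnit_one_add_N (n : ℕ) : IsUnit (1 + Nmat n).det := by
  rw [isUnit_iff_ne_zero]
  intro h0
  obtain ⟨v, hv0, hv⟩ := (Matrix.exists_mulVec_eq_zero_iff).mpr h0
  set a : Fin n → ℝ := fun i => ((Nat.choose (2*((i:ℕ)+1)) ((i:ℕ)+1) : ℝ)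
    * (Nat.choose (n+((i:ℕ)+1)) (n-((i:ℕ)+1)) : ℝ)) * (((i:ℕ):ℝ)+1) with hadef
  have hapos : ∀ i, 0 < a i := by
    intro i
    apply mul_pos (mul_pos ?_ ?_) (by positivity)
    · exact_mod_cast Nat.choose_pos (by omega)
    · exact_mod_cast Nat.choose_pos (by omega)
  have hrow : ∀ i : Fin n,
      v i + a i * ∑ k : Fin n, v k / (((i:ℕ):ℝ) + ((k:ℕ):ℝ) + 2) = 0 := by
    intro i
    have := congrFun hv i
    simp only [Pi.zero_apply] at this
    rw [show ((1 + Nmat n) *ᵥ v) i = ∑ k : Fin n, (1 + Nmat n) i k * v k from rfl] at this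
    have hsplit : ∀ k : Fin n, (1 + Nmat n) i k * v k
        = (if i = k then v k else 0) + a i * (v k / (((i:ℕ):ℝ) + ((k:ℕ):ℝ) + 2)) := by
      intro k
      by_cases h : i = k
      · subst h
        simp only [Matrix.add_apply, Matrix.one_apply_eq, Nmat, Matrix.of_apply, if_true,
          hadef]
        have hne : (((i:ℕ):ℝ) + ((i:ℕ):ℝ) + 2) ≠ 0 := by positivity
        ring
      · simp only [Matrix.add_apply, Matrix.one_apply_ne h, Nmat, Matrix.of_apply, if_neg h,
          hadef]
        have hne : (((i:ℕ):ℝ) + ((k:ℕ):ℝ) + 2) ≠ 0 := by positivity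
        ring
    rw [Finset.sum_congr rfl (fun k _ => hsplit k), Finset.sum_add_distrib,
      ← Finset.mul_sum, Finset.sum_ite_eq] at this
    simpa using this
  have hT := cauchy_nonneg n v
  have hsum : ∑ i : Fin n, ∑ k : Fin n, v i * v k / (((i:ℕ):ℝ) + ((k:ℕ):ℝ) + 2)
      = ∑ i : Fin n, -((v i)^2 / a i) := by
    refine Finset.sum_congr rfl fun i _ => ?_
    have h1 : ∑ k : Fin n, v i * v k / (((i:ℕ):ℝ) + ((k:ℕ):ℝ) + 2)
        = v i * ∑ k : Fin n, v k / (((i:ℕ):ℝ) + ((k:ℕ):ℝ) + 2) := by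
      rw [Finset.mul_sum]
      exact Finset.sum_congr rfl fun k _ => by ring
    rw [h1]
    have h2 : ∑ k : Fin n, v k / (((i:ℕ):ℝ) + ((k:ℕ):ℝ) + 2) = - v i / a i := by
      have := hrow i
      have hane := ne_of_gt (hapos i)
      field_simp
      linarith [this]
    rw [h2]
    ring
  rw [hsum] at hT
  have hzero : ∀ i : Fin n, (v i)^2 / a i = 0 := by
    have hnonneg : ∀ i ∈ Finset.univ (α := Fin n), (0:ℝ) ≤ (v i)^2 / a i := by
      intro i _
      positivity
    have hle : ∑ i : Fin n, (v i)^2 / a i ≤ 0 := by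
      have := hT
      simp only [Finset.sum_neg_distrib] at this
      linarith
    intro i
    have := (Finset.sum_eq_zero_iff_of_nonneg hnonneg).mp (le_antisymm hle
      (Finset.sum_nonneg hnonneg))
    exact this i (Finset.mem_univ i)
  apply hv0
  funext i
  have := hzero i
  have hane := ne_of_gt (hapos i)
  have : (v i)^2 = 0 := by
    rcases div_eq_zero_iff.mp this with h | h
    · exact h
    · exact absurd h hane
  simpa using pow_eq_zero_iff (n := 2) (by norm_num) |>.mp this

/-- at `x = 0`, the matrix `Z(0) = K(I − N)(I + N)^{−1}`, with `K = diag(1,…,n)`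
and `N_{jk} = binom(2j,j)binom(n+j,n-j)·j/(j+k)`, has characteristic polynomial
`∏_{j=1}^n (z − (n+1−2j))`, i.e. its eigenvalues are `n−1, n−3, …, −(n−1)`. -/
theorem stmt9 (n : ℕ)
    (K N Z : Matrix (Fin n) (Fin n) ℝ)
    (hK : K = Matrix.diagonal fun i : Fin n => ((i : ℕ) : ℝ) + 1)
    (hN : N = Matrix.of fun j k : Fin n =>
      (Nat.choose (2 * ((j : ℕ) + 1)) ((j : ℕ) + 1) : ℝ) *
        (Nat.choose (n + ((j : ℕ) + 1)) (n - ((j : ℕ) + 1)) : ℝ) *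
        ((((j : ℕ) : ℝ) + 1) / ((((j : ℕ) : ℝ) + 1) + (((k : ℕ) : ℝ) + 1))))
    (hZ : Z = K * (1 - N) * (1 + N)⁻¹) :
    IsUnit (1 + N).det ∧
    Z.charpoly = ∏ j ∈ Finset.Icc 1 n,
      (Polynomial.X - Polynomial.C ((n : ℝ) + 1 - 2 * j)) := by
  have hNm : N = Nmat n := hN
  have hKm : K = Kmat n := hK
  have hUnit : IsUnit (1 + N).det := by rw [hNm]; exact isUnit_one_add_N n
  refine ⟨hUnit, ?_⟩
  have hprod : (∏ j ∈ Finset.Icc 1 n, (X - C ((n:ℝ) + 1 - 2 * (j:ℕ))))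
      = ∏ m ∈ Finset.range n, (X - C (rt n m)) := by
    rw [show Finset.Icc 1 n = Finset.Ico 1 (n+1) by rw [Finset.Ico_add_one_right_eq_Icc],
      Finset.prod_Ico_eq_prod_range]
    simp only [Nat.add_sub_cancel]
    refine Finset.prod_congr rfl fun m _ => ?_
    unfold rt
    congr 1
    push_cast
    ring
  rw [hprod]
  -- roots
  have hroot : ∀ m ∈ Finset.range n, Z.charpoly.IsRoot (rt n m) := by
    intro m hm
    have hdetA := det_A_zero n m (Finset.mem_range.mp hm)
    have hfact : (rt n m • 1 - Z) * (1 + N) = rt n m • (1 + N) - K * (1 - N) := by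
      rw [sub_mul, smul_mul_assoc, one_mul, hZ,
        Matrix.nonsing_inv_mul_cancel_right _ _ hUnit]
    have hdz : (rt n m • 1 - Z).det * (1 + N).det = 0 := by
      rw [← Matrix.det_mul, hfact, hNm, hKm]
      exact hdetA
    have h2 : (rt n m • 1 - Z).det = 0 := by
      rcases mul_eq_zero.mp hdz with h | h
      · exact h
      · exact absurd h hUnit.ne_zero
    show Z.charpoly.eval (rt n m) = 0
    rw [eval_charpoly']
    exact h2
  -- distinctness and divisibility
  have hPm : (∏ m ∈ Finset.range n, (X - C (rt n m))).Monic :=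
    monic_prod_of_monic _ _ fun m _ => monic_X_sub_C _
  have hne : Z.charpoly ≠ 0 := (Matrix.charpoly_monic Z).ne_zero
  have hinj : ∀ a ∈ (Finset.range n).val, ∀ b ∈ (Finset.range n).val,
      rt n a = rt n b → a = b := by
    intro a _ b _ h
    unfold rt at h
    have : (a:ℝ) = (b:ℝ) := by linarith
    exact_mod_cast this
  have hnodup : ((Finset.range n).val.map (rt n)).Nodup :=
    Multiset.Nodup.map_on hinj (Finset.range n).nodup
  have hle : (Finset.range n).val.map (rt n) ≤ Z.charpoly.roots := by
    rw [Multiset.le_iff_count]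
    intro a
    by_cases ha : a ∈ (Finset.range n).val.map (rt n)
    · rw [Multiset.count_eq_one_of_mem hnodup ha]
      obtain ⟨m, hm, rfl⟩ := Multiset.mem_map.mp ha
      exact Multiset.one_le_count_iff_mem.mpr
        (Polynomial.mem_roots'.mpr ⟨hne, hroot m hm⟩)
    · rw [Multiset.count_eq_zero_of_notMem ha]
      exact Nat.zero_le _
  have hdvd : (∏ m ∈ Finset.range n, (X - C (rt n m))) ∣ Z.charpoly := by
    have h1 : (((Finset.range n).val.map (rt n)).map (fun a => X - C a)).prod
        ∣ (Z.charpoly.roots.map (fun a => X - C a)).prod :=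
      Multiset.prod_dvd_prod_of_le (Multiset.map_le_map hle)
    have h2 := Z.charpoly.prod_multiset_X_sub_C_dvd
    have h3 : (∏ m ∈ Finset.range n, (X - C (rt n m)))
        = (((Finset.range n).val.map (rt n)).map (fun a => X - C a)).prod := by
      rw [Multiset.map_map, Finset.prod_eq_multiset_prod]
      rfl
    rw [h3]
    exact dvd_trans h1 h2
  -- equal degrees, both monic
  obtain ⟨c, hc⟩ := hdvd
  have hPd : (∏ m ∈ Finset.range n, (X - C (rt n m))).natDegree = n := by
    rw [Polynomial.natDegree_prod_of_monic _ _ (fun m _ => monic_X_sub_C _)]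
    simp [Polynomial.natDegree_X_sub_C]
  have hcd : Z.charpoly.natDegree = n := by
    rw [Matrix.charpoly_natDegree_eq_dim, Fintype.card_fin]
  have hc0 : c ≠ 0 := by
    rintro rfl
    rw [mul_zero] at hc
    exact hne hc
  have hcdeg : c.natDegree = 0 := by
    have := congrArg Polynomial.natDegree hc
    rw [hcd, Polynomial.natDegree_mul hPm.ne_zero hc0, hPd] at this
    omega
  have hcC : c = C (c.coeff 0) := Polynomial.eq_C_of_natDegree_eq_zero hcdeg
  have hlead : c.coeff 0 = 1 := by
    have := congrArg Polynomial.leadingCoeff hc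
    rw [(Matrix.charpoly_monic Z).leadingCoeff, Polynomial.leadingCoeff_mul,
      hPm.leadingCoeff, one_mul, Polynomial.leadingCoeff, hcdeg] at this
    exact this.symm
  rw [hc, hcC, hlead, Polynomial.C_1, mul_one]
end

section
/- Fix a nonnegative integer n and real x. Suppose z_1(x),…,z_n(x) are differentiable real functions on an open interval that are pairwise distinct with pairwise distinct squares, avoid ±1,…,±n, and satisfy for each ℓ = 1,…,n the equation ∏_{j=1}^n (ℓ − z_j(x))/(ℓ + z_j(x)) = (−1)^{n−ℓ} e^{−2ℓx}. Then they satisfy the linear relations ∑_{j=1}^n z_j′(x)/(ℓ² − z_j(x)²) = 1 for each ℓ = 1,…,n. -/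
/-!
Taking logarithmic derivatives of both sides of the Bethe equation for `ℓ`: the right-hand side
contributes `-2ℓ`, and the factor `(ℓ - z)/(ℓ + z)` contributes
`-z'/(ℓ - z) - z'/(ℓ + z) = -2ℓ z'/(ℓ² - z²)`. Dividing by `-2ℓ` gives the relation.
-/

open Finset Filter Topology

theorem logDeriv_sub_div_add {𝕜 : Type*} [NontriviallyNormedField 𝕜] {w : 𝕜 → 𝕜} {c x : 𝕜}
    (hw : DifferentiableAt 𝕜 w x) (hc : w x ≠ c) (hc' : w x ≠ -c) :
    logDeriv (fun t => (c - w t) / (c + w t)) x = -2 * c * deriv w x / (c ^ 2 - w x ^ 2) := by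
  have hsub : c - w x ≠ 0 := sub_ne_zero.mpr hc.symm
  have hadd : c + w x ≠ 0 := fun h => hc' (eq_neg_of_add_eq_zero_right h)
  rw [logDeriv_div x hsub hadd (hw.const_sub c) (hw.const_add c), logDeriv_apply, logDeriv_apply,
    deriv_const_sub, deriv_const_add, sq_sub_sq, div_sub_div _ _ hsub hadd]
  ring

theorem logDeriv_prod_sub_div_add {𝕜 ι : Type*} [NontriviallyNormedField 𝕜] {s : Finset ι}
    {w : ι → 𝕜 → 𝕜} {c x : 𝕜} (hw : ∀ i ∈ s, DifferentiableAt 𝕜 (w i) x)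
    (hc : ∀ i ∈ s, w i x ≠ c ∧ w i x ≠ -c) :
    logDeriv (fun t => ∏ i ∈ s, (c - w i t) / (c + w i t)) x
      = ∑ i ∈ s, -2 * c * deriv (w i) x / (c ^ 2 - w i x ^ 2) := by
  have hadd : ∀ i ∈ s, c + w i x ≠ 0 := fun i hi h =>
    (hc i hi).2 (eq_neg_of_add_eq_zero_right h)
  rw [logDeriv_prod (f := fun i t => (c - w i t) / (c + w i t))]
  · exact sum_congr rfl fun i hi => logDeriv_sub_div_add (hw i hi) (hc i hi).1 (hc i hi).2
  · exact fun i hi => div_ne_zero (sub_ne_zero.mpr (hc i hi).1.symm) (hadd i hi)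
  · exact fun i hi => ((hw i hi).const_sub c).div ((hw i hi).const_add c) (hadd i hi)

theorem Real.logDeriv_const_mul_exp_mul {C : ℝ} (hC : C ≠ 0) (k x : ℝ) :
    logDeriv (fun t => C * Real.exp (k * t)) x = k := by
  rw [logDeriv_const_mul x C hC, logDeriv_apply, ((hasDerivAt_id' x).const_mul k).exp.deriv]
  field_simp

theorem stmt10_general (n : ℕ) (a b : ℝ) (z : Fin n → ℝ → ℝ)
    (hdiff : ∀ j : Fin n, ∀ x ∈ Set.Ioo a b, DifferentiableAt ℝ (z j) x)
    (havoid : ∀ x ∈ Set.Ioo a b, ∀ j : Fin n, ∀ ℓ ∈ Finset.Icc 1 n,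
      z j x ≠ (ℓ : ℝ) ∧ z j x ≠ -(ℓ : ℝ))
    (hbethe : ∀ x ∈ Set.Ioo a b, ∀ ℓ ∈ Finset.Icc 1 n,
      ∏ j, ((ℓ : ℝ) - z j x) / ((ℓ : ℝ) + z j x)
        = (-1) ^ (n - ℓ) * Real.exp (-2 * ℓ * x)) :
    ∀ x ∈ Set.Ioo a b, ∀ ℓ ∈ Finset.Icc 1 n,
      ∑ j, deriv (z j) x / ((ℓ : ℝ) ^ 2 - (z j x) ^ 2) = 1 := by
  intro x hx ℓ hℓ
  have h2ℓ : (-2 * ℓ : ℝ) ≠ 0 := by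
    have : (1 : ℝ) ≤ ℓ := by exact_mod_cast (mem_Icc.mp hℓ).1
    linarith
  have hbethe_near : (fun t => ∏ j, ((ℓ : ℝ) - z j t) / ((ℓ : ℝ) + z j t))
      =ᶠ[𝓝 x] fun t => (-1) ^ (n - ℓ) * Real.exp (-2 * ℓ * t) :=
    eventually_of_mem (isOpen_Ioo.mem_nhds hx) fun t ht => hbethe t ht ℓ hℓ
  have hlog : (-2 * ℓ : ℝ) * ∑ j, deriv (z j) x / ((ℓ : ℝ) ^ 2 - (z j x) ^ 2) = -2 * ℓ := by
    have h := (logDeriv_congr_nhds hbethe_near).eq_of_nhds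
    rw [logDeriv_prod_sub_div_add (fun j _ => hdiff j x hx) (fun j _ => havoid x hx j ℓ hℓ),
      Real.logDeriv_const_mul_exp_mul (by positivity)] at h
    simpa only [mul_div_assoc, ← mul_sum] using h
  exact mul_left_cancel₀ h2ℓ (hlog.trans (mul_one _).symm)

/-- differentiating the Bethe equations: if differentiable functions
`z_1,…,z_n` on an open interval are pairwise distinct with pairwise distinct squares,
avoid `±1,…,±n`, and satisfy `∏_j (ℓ − z_j(x))/(ℓ + z_j(x)) = (−1)^{n−ℓ} e^{−2ℓx}`
for `ℓ = 1,…,n`, then `∑_j z_j′(x)/(ℓ² − z_j(x)²) = 1` for each `ℓ = 1,…,n`. -/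
theorem stmt10 (n : ℕ) (a b : ℝ) (hab : a < b) (z : Fin n → ℝ → ℝ)
    (hdiff : ∀ j : Fin n, ∀ x ∈ Set.Ioo a b, DifferentiableAt ℝ (z j) x)
    (hdist : ∀ x ∈ Set.Ioo a b, ∀ j k : Fin n, j ≠ k → z j x ≠ z k x)
    (hdistsq : ∀ x ∈ Set.Ioo a b, ∀ j k : Fin n, j ≠ k → (z j x) ^ 2 ≠ (z k x) ^ 2)
    (havoid : ∀ x ∈ Set.Ioo a b, ∀ j : Fin n, ∀ ℓ ∈ Finset.Icc 1 n,
      z j x ≠ (ℓ : ℝ) ∧ z j x ≠ -(ℓ : ℝ))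
    (hbethe : ∀ x ∈ Set.Ioo a b, ∀ ℓ ∈ Finset.Icc 1 n,
      ∏ j, ((ℓ : ℝ) - z j x) / ((ℓ : ℝ) + z j x)
        = (-1) ^ (n - ℓ) * Real.exp (-2 * ℓ * x)) :
    ∀ x ∈ Set.Ioo a b, ∀ ℓ ∈ Finset.Icc 1 n,
      ∑ j, deriv (z j) x / ((ℓ : ℝ) ^ 2 - (z j x) ^ 2) = 1 :=
  stmt10_general n a b z hdiff havoid hbethe
end

section
/- Let n ≥ 1 and let z_1,…,z_n and w_1,…,w_n be real numbers such that z_1²,…,z_n² are pairwise distinct and disjoint from {1²,…,n²}. If ∑_{j=1}^n w_j/(ℓ² − z_j²) = 1 for all ℓ = 1,…,n, then for each ℓ, w_ℓ = ∏_{j=1}^n (j² − z_ℓ²) / ∏_{j=1, j≠ℓ}^n (z_j² − z_ℓ²). -/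
open Finset

open Polynomial in
/-- Cauchy-matrix lemma: if `z_1²,…,z_n²` are pairwise distinct and disjoint
from `{1²,…,n²}`, and `∑_j w_j/(ℓ² − z_j²) = 1` for `ℓ = 1,…,n`, then
`w_ℓ = ∏_{j=1}^n (j² − z_ℓ²) / ∏_{j≠ℓ} (z_j² − z_ℓ²)`. -/
theorem stmt11 (n : ℕ) (hn : 1 ≤ n) (z w : Fin n → ℝ)
    (hdist : Function.Injective fun j => (z j) ^ 2)
    (havoid : ∀ (j : Fin n), ∀ ℓ ∈ Finset.Icc 1 n, (z j) ^ 2 ≠ (ℓ : ℝ) ^ 2)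
    (hsys : ∀ ℓ ∈ Finset.Icc 1 n, ∑ j, w j / ((ℓ : ℝ) ^ 2 - (z j) ^ 2) = 1) :
    ∀ ℓ : Fin n, w ℓ =
      (∏ j ∈ Finset.Icc 1 n, ((j : ℝ) ^ 2 - (z ℓ) ^ 2)) /
        ∏ j ∈ Finset.univ.erase ℓ, ((z j) ^ 2 - (z ℓ) ^ 2) := by
  set u : Fin n → ℝ := fun j => (z j) ^ 2 with hu
  set P : ℝ[X] := ∏ j : Fin n, (X - C (u j)) with hP
  set Q : ℝ[X] := ∏ ℓ ∈ Finset.Icc 1 n, (X - C ((ℓ : ℝ) ^ 2)) with hQ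
  set H : ℝ[X] := ∑ j : Fin n, C (w j) * ∏ k ∈ Finset.univ.erase j, (X - C (u k)) with hH
  have hPmonic : P.Monic := monic_prod_of_monic _ _ fun _ _ => monic_X_sub_C _
  have hQmonic : Q.Monic := monic_prod_of_monic _ _ fun _ _ => monic_X_sub_C _
  have hcard : (Finset.Icc 1 n).card = n := by simp
  have hPdeg : P.degree = n := by
    rw [degree_eq_natDegree hPmonic.ne_zero, hP,
      natDegree_prod_of_monic _ _ (fun _ _ => monic_X_sub_C _)]
    simp
  have hQdeg : Q.degree = n := by
    have e : ∀ m ∈ Finset.Icc 1 n, ((X : ℝ[X]) - C ((m : ℝ) ^ 2)).natDegree = 1 :=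
      fun m _ => natDegree_X_sub_C _
    rw [degree_eq_natDegree hQmonic.ne_zero, hQ,
      natDegree_prod_of_monic _ _ (fun _ _ => monic_X_sub_C _),
      Finset.sum_congr rfl e, Finset.sum_const, hcard, smul_eq_mul, mul_one]
  -- degree of H < n
  have hHdeg : H.degree < (Finset.Icc 1 n).card := by
    rw [hcard]
    refine lt_of_le_of_lt (degree_sum_le _ _) ?_
    rw [Finset.sup_lt_iff (by exact_mod_cast WithBot.bot_lt_coe n)]
    intro j _
    refine lt_of_le_of_lt (degree_mul_le _ _) ?_
    have hm : (∏ k ∈ Finset.univ.erase j, (X - C (u k))).Monic :=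
      monic_prod_of_monic _ _ fun _ _ => monic_X_sub_C _
    have h1 : (∏ k ∈ Finset.univ.erase j, (X - C (u k))).degree = ((n - 1 : ℕ) : WithBot ℕ) := by
      rw [degree_eq_natDegree hm.ne_zero,
        natDegree_prod_of_monic _ _ (fun _ _ => monic_X_sub_C _)]
      simp [Finset.card_erase_of_mem]
    rw [h1]
    calc (C (w j)).degree + ((n - 1 : ℕ) : WithBot ℕ) ≤ 0 + ((n - 1 : ℕ) : WithBot ℕ) := by
          gcongr; exact degree_C_le
      _ = ((n - 1 : ℕ) : WithBot ℕ) := by rw [zero_add]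
      _ < (n : WithBot ℕ) := by exact_mod_cast Nat.sub_lt hn one_pos
  have hPQdeg : (P - Q).degree < (Finset.Icc 1 n).card := by
    rw [hcard]
    have := degree_sub_lt (hPdeg.trans hQdeg.symm) hPmonic.ne_zero
      (by rw [hPmonic.leadingCoeff, hQmonic.leadingCoeff])
    rwa [hPdeg] at this
  -- evaluations of P, Q, H
  have hevalP : ∀ x : ℝ, P.eval x = ∏ j : Fin n, (x - u j) := by
    intro x; rw [hP, eval_prod]; simp
  have hevalQ : ∀ x : ℝ, Q.eval x = ∏ ℓ ∈ Finset.Icc 1 n, (x - (ℓ : ℝ) ^ 2) := by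
    intro x; rw [hQ, eval_prod]; simp
  have hevalH : ∀ x : ℝ, H.eval x = ∑ j : Fin n, w j * ∏ k ∈ Finset.univ.erase j, (x - u k) := by
    intro x; rw [hH, eval_finset_sum]; simp [eval_prod]
  -- injectivity of ℓ ↦ ℓ² on Icc 1 n
  have hinj : Set.InjOn (fun ℓ : ℕ => ((ℓ : ℝ)) ^ 2) (Finset.Icc 1 n) := by
    intro a _ b _ hab
    simp only at hab
    have : (a : ℝ) = b := by nlinarith [Nat.cast_nonneg (α := ℝ) a, Nat.cast_nonneg (α := ℝ) b]
    exact_mod_cast this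
  -- H = P - Q
  have hmain : H = P - Q := by
    refine Polynomial.eq_of_degrees_lt_of_eval_index_eq _ hinj hHdeg hPQdeg ?_
    intro ℓ hℓ
    rw [eval_sub, hevalH, hevalP, hevalQ]
    have hQ0 : ∏ m ∈ Finset.Icc 1 n, (((ℓ : ℝ)) ^ 2 - (m : ℝ) ^ 2) = 0 :=
      Finset.prod_eq_zero hℓ (by ring)
    rw [hQ0, sub_zero]
    have hne : ∀ j : Fin n, ((ℓ : ℝ)) ^ 2 - u j ≠ 0 := fun j =>
      sub_ne_zero.mpr fun h => havoid j ℓ hℓ h.symm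
    have hs := hsys ℓ hℓ
    calc ∑ j : Fin n, w j * ∏ k ∈ Finset.univ.erase j, (((ℓ : ℝ)) ^ 2 - u k)
        = ∑ j : Fin n, (w j / (((ℓ : ℝ)) ^ 2 - u j)) * ∏ k : Fin n, (((ℓ : ℝ)) ^ 2 - u k) := by
          refine Finset.sum_congr rfl fun j _ => ?_
          rw [← Finset.mul_prod_erase _ _ (Finset.mem_univ j),
            eq_comm, div_mul_eq_mul_div, div_eq_iff (hne j)]
          ring
      _ = (∑ j : Fin n, w j / (((ℓ : ℝ)) ^ 2 - u j)) * ∏ k : Fin n, (((ℓ : ℝ)) ^ 2 - u k) := by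
          rw [Finset.sum_mul]
      _ = ∏ k : Fin n, (((ℓ : ℝ)) ^ 2 - u k) := by rw [hs, one_mul]
  -- evaluate at u ℓ
  intro ℓ
  have heval := congrArg (Polynomial.eval (u ℓ)) hmain
  rw [eval_sub, hevalH, hevalP, hevalQ] at heval
  have hP0 : ∏ j : Fin n, (u ℓ - u j) = 0 :=
    Finset.prod_eq_zero (Finset.mem_univ ℓ) (by ring)
  have hsum : ∑ j : Fin n, w j * ∏ k ∈ Finset.univ.erase j, (u ℓ - u k)
      = w ℓ * ∏ k ∈ Finset.univ.erase ℓ, (u ℓ - u k) := by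
    refine Finset.sum_eq_single ℓ ?_ (by simp)
    intro j _ hjℓ
    have : ∏ k ∈ Finset.univ.erase j, (u ℓ - u k) = 0 :=
      Finset.prod_eq_zero (Finset.mem_erase.mpr ⟨hjℓ.symm, Finset.mem_univ ℓ⟩) (by ring)
    rw [this, mul_zero]
  rw [hsum, hP0, zero_sub] at heval
  -- convert signs
  have hcarde : (Finset.univ.erase ℓ).card = n - 1 := by simp
  have h1 : ∏ k ∈ Finset.univ.erase ℓ, (u ℓ - u k)
      = (-1 : ℝ) ^ (n - 1) * ∏ k ∈ Finset.univ.erase ℓ, (u k - u ℓ) := by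
    rw [← hcarde, ← Finset.prod_const, ← Finset.prod_mul_distrib]
    exact Finset.prod_congr rfl fun k _ => by ring
  have h2 : ∏ m ∈ Finset.Icc 1 n, (u ℓ - (m : ℝ) ^ 2)
      = (-1 : ℝ) ^ n * ∏ m ∈ Finset.Icc 1 n, ((m : ℝ) ^ 2 - u ℓ) := by
    have e : ((-1 : ℝ)) ^ n = ∏ _m ∈ Finset.Icc 1 n, (-1 : ℝ) := by
      rw [Finset.prod_const, hcard]
    rw [e, ← Finset.prod_mul_distrib]
    exact Finset.prod_congr rfl fun m _ => by ring
  rw [h1, h2] at heval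
  have hne : ∏ k ∈ Finset.univ.erase ℓ, (u k - u ℓ) ≠ 0 := by
    refine Finset.prod_ne_zero_iff.mpr fun k hk => ?_
    have : k ≠ ℓ := (Finset.mem_erase.mp hk).1
    exact sub_ne_zero.mpr fun h => this (hdist h)
  have hpow : (-(-1 : ℝ) ^ n) = (-1 : ℝ) ^ (n - 1) := by
    obtain ⟨m, rfl⟩ := Nat.exists_eq_add_of_le hn
    simp [pow_add]
  have hsign : ((-1 : ℝ)) ^ (n - 1) ≠ 0 := pow_ne_zero _ (by norm_num)
  have hkey : w ℓ * ∏ k ∈ Finset.univ.erase ℓ, (u k - u ℓ)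
      = ∏ m ∈ Finset.Icc 1 n, ((m : ℝ) ^ 2 - u ℓ) := by
    refine mul_left_cancel₀ hsign ?_
    calc ((-1 : ℝ)) ^ (n - 1) * (w ℓ * ∏ k ∈ Finset.univ.erase ℓ, (u k - u ℓ))
        = w ℓ * (((-1 : ℝ)) ^ (n - 1) * ∏ k ∈ Finset.univ.erase ℓ, (u k - u ℓ)) := by ring
      _ = -((-1 : ℝ) ^ n * ∏ m ∈ Finset.Icc 1 n, ((m : ℝ) ^ 2 - u ℓ)) := heval
      _ = (-(-1 : ℝ) ^ n) * ∏ m ∈ Finset.Icc 1 n, ((m : ℝ) ^ 2 - u ℓ) := by ring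
      _ = ((-1 : ℝ)) ^ (n - 1) * ∏ m ∈ Finset.Icc 1 n, ((m : ℝ) ^ 2 - u ℓ) := by rw [hpow]
  show w ℓ = (∏ j ∈ Finset.Icc 1 n, ((j : ℝ) ^ 2 - u ℓ)) /
      ∏ j ∈ Finset.univ.erase ℓ, (u j - u ℓ)
  rw [eq_div_iff hne]
  exact hkey
end

section
/- Fix a nonnegative integer n. As x → +∞, each eigenvalue of Z(x) = K(I − e^{−2xK}N)(I + e^{−2xK}N)^{−1} tends to a member of {1,2,…,n}, and as x → −∞ each tends to a member of {−1,−2,…,−n}; more precisely, Z(x) → K as x → +∞ and Z(x) → −K' where the spectrum tends to {−1,…,−n} as x → −∞, so the zeros z_1(x),…,z_n(x) of Γ(1−z)P_n^z(tanh x) move from {−1,…,−n} to {1,…,n} as x runs over ℝ. -/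
/-!
`N` is a row-scaled Cauchy matrix `(c_j a_j / (a_j + a_k))` with distinct positive nodes
`a_j = j + 1`, hence invertible (barycentric Lagrange interpolation at the nodes `-a_k`).
As `x → +∞` the perturbation `e^{-2xK} N` vanishes and `Z(x) → K`. As `x → -∞`, conjugating
by `e^{-2xK}` (which commutes with `K`) turns `Z(x)` into `K (e^{2xK} - N)(e^{2xK} + N)⁻¹`,
which has the same characteristic polynomial and tends to `K (-N) N⁻¹ = -K`. Coefficients of the
characteristic polynomial are polynomial, hence continuous, in the entries.
-/

open Finset Polynomial Matrix Filter

theorem Finset.prod_Icc_one_eq_prod_fin {M : Type*} [CommMonoid M] (f : ℕ → M) (n : ℕ) :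
    ∏ j ∈ Icc 1 n, f j = ∏ i : Fin n, f (i + 1) := by
  rw [Fin.prod_univ_eq_prod_range (fun i => f (i + 1)), range_eq_Ico, prod_Ico_add', zero_add,
    Ico_add_one_right_eq_Icc]

namespace Matrix

open Lagrange in
theorem det_cauchy_ne_zero {F ι : Type*} [Field F] [Fintype ι] [DecidableEq ι] {a b : ι → F}
    (ha : Function.Injective a) (hb : Function.Injective b) (hab : ∀ i j, a i ≠ b j) :
    (of fun i j => (a i - b j)⁻¹).det ≠ 0 := by
  rw [Ne, ← exists_mulVec_eq_zero_iff]
  rintro ⟨v, hv, hCv⟩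
  -- By the first barycentric formula, the interpolant of `v / w` at the nodes `b`
  -- (`w` the barycentric weights) vanishes at every `a i`; its degree is `< card ι`.
  set r : ι → F := fun k => v k / nodalWeight univ b k
  have hw : ∀ k, nodalWeight univ b k ≠ 0 := fun k => nodalWeight_ne_zero hb.injOn (mem_univ k)
  have hzero : interpolate univ b r = 0 := by
    refine eq_zero_of_degree_lt_of_eval_index_eq_zero univ ha.injOn
      (degree_interpolate_lt r hb.injOn) fun i _ => ?_
    rw [eval_interpolate_not_at_node r fun k _ => hab i k]
    convert mul_zero _ using 2
    have hCvi := congrFun hCv i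
    simp only [mulVec, dotProduct, of_apply, Pi.zero_apply] at hCvi
    rw [← hCvi]
    refine sum_congr rfl fun k _ => ?_
    simp only [r]
    field_simp [hw k]
  refine hv (funext fun k => ?_)
  have hk := eval_interpolate_at_node r hb.injOn (mem_univ k)
  rw [hzero, eval_zero, eq_comm, div_eq_zero_iff] at hk
  exact hk.resolve_right (hw k)

theorem det_of_mul_div_add_ne_zero {F ι : Type*} [Field F] [Fintype ι] [DecidableEq ι]
    {a c : ι → F} (ha : Function.Injective a) (hadd : ∀ i j, a i + a j ≠ 0)
    (hca : ∀ i, c i * a i ≠ 0) : (of fun i j => c i * (a i / (a i + a j))).det ≠ 0 := by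
  have hfac : (of fun i j => c i * (a i / (a i + a j))) =
      diagonal (fun i => c i * a i) * of fun i j => (a i - -a j)⁻¹ := by
    ext i j
    simp [sub_neg_eq_add, div_eq_mul_inv, mul_assoc]
  rw [hfac, det_mul, det_diagonal]
  exact mul_ne_zero (prod_ne_zero_iff.mpr fun i _ => hca i) <|
    det_cauchy_ne_zero ha (neg_injective.comp ha) fun i j => by
      rw [Ne, ← sub_eq_zero, sub_neg_eq_add]; exact hadd i j

theorem continuous_charpoly_coeff {R n : Type*} [CommRing R] [TopologicalSpace R]
    [IsTopologicalRing R] [Fintype n] [DecidableEq n] (i : ℕ) :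
    Continuous fun M : Matrix n n R => M.charpoly.coeff i := by
  have h : ∀ M : Matrix n n R, M.charpoly.coeff i =
      MvPolynomial.eval (fun p : n × n => M p.1 p.2) ((charpoly.univ R n).coeff i) := fun M => by
    rw [MvPolynomial.eval, charpoly.univ_coeff_eval₂Hom]
    rfl
  simp only [h]
  exact (MvPolynomial.continuous_eval _).comp (continuous_pi fun p => continuous_apply_apply _ _)

theorem charpoly_diagonal_fin_succ {R : Type*} [CommRing R] (f : ℕ → R) (n : ℕ) :
    (diagonal fun i : Fin n => f (i + 1)).charpoly = ∏ j ∈ Icc 1 n, (X - C (f j)) := by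
  rw [charpoly_diagonal, prod_Icc_one_eq_prod_fin]

theorem charpoly_mul_one_sub_mul_mul_one_add_mul_inv {R n : Type*} [CommRing R] [Fintype n]
    [DecidableEq n] {K P E N : Matrix n n R} (hPE : P * E = 1) (hKP : Commute K P) :
    (K * (1 - P * N) * (1 + P * N)⁻¹).charpoly = (K * (E - N) * (E + N)⁻¹).charpoly := by
  have hsub : 1 - P * N = P * (E - N) := by rw [Matrix.mul_sub, hPE]
  have hadd : 1 + P * N = P * (E + N) := by rw [Matrix.mul_add, hPE]
  rw [hsub, hadd, mul_inv_rev, inv_eq_right_inv hPE,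
    show K * (P * (E - N)) * ((E + N)⁻¹ * E) = P * (K * (E - N) * (E + N)⁻¹ * E) by
      simp only [← mul_assoc, hKP.eq],
    charpoly_mul_comm, mul_assoc _ E, mul_eq_one_comm.mp hPE, mul_one]

end Matrix

section Limits

variable {α 𝕜 n : Type*} [Field 𝕜] [TopologicalSpace 𝕜] [IsTopologicalDivisionRing 𝕜]
  [Fintype n] [DecidableEq n] {l : Filter α}

theorem Filter.Tendsto.matrix_inv {A : α → Matrix n n 𝕜} {A₀ : Matrix n n 𝕜}
    (hA : Tendsto A l (nhds A₀)) (h : A₀.det ≠ 0) :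
    Tendsto (fun x => (A x)⁻¹) l (nhds A₀⁻¹) :=
  have hinv : ContinuousAt Ring.inverse A₀.det := by
    simpa [Ring.inverse_eq_inv'] using continuousAt_inv₀ h
  (continuousAt_matrix_inv A₀ hinv).tendsto.comp hA

theorem tendsto_mul_one_sub_mul_mul_one_add_mul_inv (K N : Matrix n n 𝕜)
    {D : α → Matrix n n 𝕜} (hD : Tendsto D l (nhds 0)) :
    Tendsto (fun x => K * (1 - D x * N) * (1 + D x * N)⁻¹) l (nhds K) := by
  have hA : Tendsto (fun x => 1 - D x * N) l (nhds 1) := by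
    simpa using tendsto_const_nhds.sub (hD.mul_const N)
  have hB : Tendsto (fun x => 1 + D x * N) l (nhds 1) := by
    simpa using tendsto_const_nhds.add (hD.mul_const N)
  simpa using (hA.const_mul K).mul (hB.matrix_inv (by simp))

theorem tendsto_mul_sub_mul_add_inv (K : Matrix n n 𝕜) {N : Matrix n n 𝕜} (hN : N.det ≠ 0)
    {E : α → Matrix n n 𝕜} (hE : Tendsto E l (nhds 0)) :
    Tendsto (fun x => K * (E x - N) * (E x + N)⁻¹) l (nhds (-K)) := by
  have hA : Tendsto (fun x => E x - N) l (nhds (-N)) := by simpa using hE.sub_const N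
  have hB : Tendsto (fun x => E x + N) l (nhds N) := by simpa using hE.add_const N
  simpa [mul_assoc, mul_nonsing_inv N (isUnit_iff_ne_zero.mpr hN)] using
    (hA.const_mul K).mul (hB.matrix_inv hN)

end Limits

theorem tendsto_diagonal_exp_mul_atBot {ι : Type*} [Fintype ι] [DecidableEq ι] {c : ι → ℝ}
    (hc : ∀ i, 0 < c i) :
    Tendsto (fun y => diagonal fun i => Real.exp (y * c i)) atBot (nhds 0) := by
  rw [← diagonal_zero]
  refine (continuous_id.matrix_diagonal.tendsto _).comp (tendsto_pi_nhds.mpr fun i => ?_)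
  exact Real.tendsto_exp_atBot.comp (tendsto_id.atBot_mul_const (hc i))

/-- with `K = diag(1,…,n)`, `N_{jk} = binom(2j,j)binom(n+j,n−j)·j/(j+k)` and
`Z(x) = K(I − e^{−2xK}N)(I + e^{−2xK}N)^{−1}`, one has `Z(x) → K` as `x → +∞` (so the
eigenvalues tend to `{1,…,n}`), while as `x → −∞` the characteristic polynomial of `Z(x)`
tends (coefficientwise) to `∏_{j=1}^n (z + j)`, so the eigenvalues of `Z(x)`, i.e. the
zeros of `Γ(1−z)P_n^z(tanh x)`, move from `{−1,…,−n}` to `{1,…,n}` as `x` runs over `ℝ`. -/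
theorem stmt12 (n : ℕ)
    (K N : Matrix (Fin n) (Fin n) ℝ)
    (hK : K = Matrix.diagonal fun i : Fin n => ((i : ℕ) : ℝ) + 1)
    (hN : N = Matrix.of fun j k : Fin n =>
      (Nat.choose (2 * ((j : ℕ) + 1)) ((j : ℕ) + 1) : ℝ) *
        (Nat.choose (n + ((j : ℕ) + 1)) (n - ((j : ℕ) + 1)) : ℝ) *
        ((((j : ℕ) : ℝ) + 1) / ((((j : ℕ) : ℝ) + 1) + (((k : ℕ) : ℝ) + 1))))
    (Z : ℝ → Matrix (Fin n) (Fin n) ℝ)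
    (hZ : ∀ x : ℝ, Z x =
      K * (1 - (Matrix.diagonal fun i : Fin n => Real.exp (-2 * x * (((i : ℕ) : ℝ) + 1))) * N)
        * (1 + (Matrix.diagonal fun i : Fin n =>
            Real.exp (-2 * x * (((i : ℕ) : ℝ) + 1))) * N)⁻¹) :
    Tendsto Z atTop (nhds K) ∧
    (∀ m : ℕ, Tendsto (fun x => ((Z x).charpoly).coeff m) atTop
      (nhds ((∏ j ∈ Finset.Icc 1 n, (Polynomial.X - Polynomial.C (j : ℝ))).coeff m))) ∧
    (∀ m : ℕ, Tendsto (fun x => ((Z x).charpoly).coeff m) atBot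
      (nhds ((∏ j ∈ Finset.Icc 1 n, (Polynomial.X + Polynomial.C (j : ℝ))).coeff m))) := by
  set D : ℝ → Matrix (Fin n) (Fin n) ℝ :=
    fun y => diagonal fun i => Real.exp (y * ((i : ℕ) + 1))
  have hD : Tendsto D atBot (nhds 0) := tendsto_diagonal_exp_mul_atBot fun i => by positivity
  have hZD : ∀ x, Z x = K * (1 - D (-2 * x) * N) * (1 + D (-2 * x) * N)⁻¹ := hZ
  have hNdet : N.det ≠ 0 := by
    rw [hN]
    refine det_of_mul_div_add_ne_zero (fun i j h => Fin.ext (by simpa using h))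
      (fun i j => by positivity) fun i => ?_
    have := Nat.choose_pos (n := 2 * ((i : ℕ) + 1)) (k := (i : ℕ) + 1) (by omega)
    have := Nat.choose_pos (n := n + ((i : ℕ) + 1)) (k := n - ((i : ℕ) + 1)) (by omega)
    positivity
  have hZK : Tendsto Z atTop (nhds K) := by
    rw [funext hZD]
    exact tendsto_mul_one_sub_mul_mul_one_add_mul_inv K N
      (hD.comp (tendsto_id.const_mul_atTop_of_neg (by norm_num)))
  have hWK : Tendsto (fun x => K * (D (2 * x) - N) * (D (2 * x) + N)⁻¹) atBot (nhds (-K)) :=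
    tendsto_mul_sub_mul_add_inv K hNdet (hD.comp (tendsto_id.const_mul_atBot (by norm_num)))
  refine ⟨hZK, fun m => ?_, fun m => ?_⟩
  · have hKchar : K.charpoly = ∏ j ∈ Icc 1 n, (X - C (j : ℝ)) := by
      rw [← charpoly_diagonal_fin_succ, hK]; push_cast; rfl
    rw [← hKchar]
    exact ((continuous_charpoly_coeff m).tendsto K).comp hZK
  · have hKchar : (-K).charpoly = ∏ j ∈ Icc 1 n, (X + C (j : ℝ)) := by
      simp_rw [← sub_neg_eq_add _ (C _), ← map_neg, ← charpoly_diagonal_fin_succ, hK,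
        diagonal_neg]
      push_cast; rfl
    have hchar : ∀ x, (Z x).charpoly = (K * (D (2 * x) - N) * (D (2 * x) + N)⁻¹).charpoly :=
      fun x => by
        rw [hZD]
        refine charpoly_mul_one_sub_mul_mul_one_add_mul_inv ?_ (hK ▸ commute_diagonal _ _)
        simp only [D, diagonal_mul_diagonal, ← Real.exp_add, neg_mul, neg_add_cancel,
          Real.exp_zero, diagonal_one]
    simp only [hchar, ← hKchar]
    exact ((continuous_charpoly_coeff m).tendsto (-K)).comp hWK
end

section
/- Fix n ≥ 1 and pairwise distinct nonzero reals z_1,…,z_n with pairwise distinct squares, all distinct from ±1,…,±n. Define the n×n matrix U with entries U_{jk} = (∏_{ℓ=1}^n (ℓ²−z_j²) / ∏_{ℓ≠j} (z_ℓ²−z_j²))^{1/2} · (1/(z_j²−k²)) · (∏_{ℓ=1}^n (k²−z_ℓ²) / ∏_{ℓ≠k} (k²−ℓ²))^{1/2}, assuming all quantities under square roots are nonnegative. Then U is an orthogonal matrix: UᵀU = I. -/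
open Finset Polynomial

section Aux

lemma basis_leadingCoeff' {F : Type*} [Field F] {ι : Type*} [DecidableEq ι]
    {s : Finset ι} {v : ι → F} {i : ι} :
    (Lagrange.basis s v i).leadingCoeff = ∏ j ∈ s.erase i, (v i - v j)⁻¹ := by
  rw [Lagrange.basis, leadingCoeff_prod]
  refine prod_congr rfl fun j hj => ?_
  rw [Lagrange.basisDivisor, leadingCoeff_mul, leadingCoeff_C,
    (monic_X_sub_C (v j)).leadingCoeff, mul_one]

lemma key_sum {F : Type*} [Field F] {ι : Type*} [DecidableEq ι]
    (s : Finset ι) (v : ι → F) (hvs : Set.InjOn v s) (S : F[X])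
    (hd : S.degree < (#s - 1 : ℕ)) :
    ∑ i ∈ s, S.eval (v i) * (∏ j ∈ s.erase i, (v i - v j))⁻¹ = 0 := by
  have hd' : S.degree < (#s : ℕ) := hd.trans_le (by exact_mod_cast Nat.sub_le #s 1)
  have hint := Lagrange.eq_interpolate hvs hd'
  have hcoeff := congrArg (fun p => Polynomial.coeff p (#s - 1)) hint
  simp only [Lagrange.interpolate_apply, Polynomial.finset_sum_coeff] at hcoeff
  have hS0 : S.coeff (#s - 1) = 0 := Polynomial.coeff_eq_zero_of_degree_lt hd
  rw [hS0] at hcoeff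
  calc ∑ i ∈ s, S.eval (v i) * (∏ j ∈ s.erase i, (v i - v j))⁻¹
      = ∑ i ∈ s, (C (S.eval (v i)) * Lagrange.basis s v i).coeff (#s - 1) := by
        refine sum_congr rfl fun i hi => ?_
        rw [Polynomial.coeff_C_mul]
        congr 1
        have h1 := Lagrange.natDegree_basis hvs hi
        rw [← h1, Polynomial.coeff_natDegree, basis_leadingCoeff', prod_inv_distrib]
    _ = 0 := hcoeff.symm

lemma erase_castSucc {n : ℕ} (j : Fin n) :
    (Finset.univ : Finset (Fin (n+1))).erase (Fin.castSucc j)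
      = insert (Fin.last n) ((Finset.univ.erase j).map Fin.castSuccEmb) := by
  ext x
  simp only [mem_erase, mem_univ, and_true, mem_insert, mem_map, Fin.coe_castSuccEmb]
  constructor
  · intro hx
    rcases Fin.eq_castSucc_or_eq_last x with ⟨y, rfl⟩ | rfl
    · exact Or.inr ⟨y, fun h => hx (congrArg Fin.castSucc h), rfl⟩
    · exact Or.inl rfl
  · rintro (rfl | ⟨y, hy, rfl⟩)
    · exact (Fin.castSucc_lt_last j).ne'
    · exact fun h => hy (Fin.castSucc_injective _ h)

lemma erase_last {n : ℕ} :
    (Finset.univ : Finset (Fin (n+1))).erase (Fin.last n)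
      = Finset.univ.map Fin.castSuccEmb := by
  ext x
  simp only [mem_erase, mem_univ, and_true, mem_map, Fin.coe_castSuccEmb]
  constructor
  · intro hx
    rcases Fin.eq_castSucc_or_eq_last x with ⟨y, rfl⟩ | rfl
    · exact ⟨y, trivial, rfl⟩
    · exact absurd rfl hx
  · rintro ⟨y, -, rfl⟩
    exact (Fin.castSucc_lt_last y).ne

lemma prod_erase_castSucc {n : ℕ} (j : Fin n) (g : Fin (n+1) → ℝ) :
    ∏ ℓ ∈ (Finset.univ : Finset (Fin (n+1))).erase (Fin.castSucc j), g ℓ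
      = (∏ ℓ ∈ Finset.univ.erase j, g (Fin.castSucc ℓ)) * g (Fin.last n) := by
  rw [erase_castSucc, prod_insert, prod_map, mul_comm]
  · rfl
  · simp only [mem_map, Fin.coe_castSuccEmb]
    rintro ⟨y, -, hy⟩
    exact (Fin.castSucc_lt_last y).ne hy

lemma prod_erase_last {n : ℕ} (g : Fin (n+1) → ℝ) :
    ∏ ℓ ∈ (Finset.univ : Finset (Fin (n+1))).erase (Fin.last n), g ℓ
      = ∏ ℓ : Fin n, g (Fin.castSucc ℓ) := by
  rw [erase_last, prod_map]; rfl

lemma prod_neg' {ι : Type*} (s : Finset ι) (f : ι → ℝ) :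
    ∏ i ∈ s, (-(f i)) = (-1 : ℝ) ^ #s * ∏ i ∈ s, f i := by
  rw [← prod_const, ← prod_mul_distrib]
  exact prod_congr rfl fun i _ => by ring


lemma alg1 (ε W t a b : ℝ) (hε : ε = 1 ∨ ε = -1) (hW : W ≠ 0) (hab : a = -b) (hb : b ≠ 0) :
    (a * t) / (ε * W) * (b⁻¹ * b⁻¹) = (-ε) * (t * (W * b)⁻¹) := by
  subst hab
  rcases hε with rfl | rfl <;> field_simp <;> ring

lemma alg2 (ε W t a b a' b' : ℝ) (hε : ε = 1 ∨ ε = -1) (hW : W ≠ 0) (hab : a = -b) (hb : b ≠ 0)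
    (hab' : a' = -b') (hb' : b' ≠ 0) :
    (a * (a' * t)) / (ε * W) * (b⁻¹ * b'⁻¹) = ε * (t * W⁻¹) := by
  subst hab; subst hab'
  rcases hε with rfl | rfl <;> field_simp <;> ring

lemma alg3 (ε Q T E : ℝ) (hε : ε = 1 ∨ ε = -1) (hQ : Q ≠ 0) (hT : T ≠ 0) (hE : E = ε * T) :
    (Q / E) * (ε * (T * Q⁻¹)) = 1 := by
  subst hE
  rcases hε with rfl | rfl <;> field_simp

end Aux

/-- the Cauchy-type matrix
`U_{jk} = (∏_ℓ (ℓ²−z_j²)/∏_{ℓ≠j}(z_ℓ²−z_j²))^{1/2} · (z_j²−k²)⁻¹ ·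
(∏_ℓ (k²−z_ℓ²)/∏_{ℓ≠k}(k²−ℓ²))^{1/2}` is orthogonal: `Uᵀ U = I`. -/
theorem stmt14 (n : ℕ) (hn : 1 ≤ n) (z : Fin n → ℝ)
    (hne : ∀ j, z j ≠ 0)
    (hdistsq : ∀ j k : Fin n, j ≠ k → (z j) ^ 2 ≠ (z k) ^ 2)
    (havoid : ∀ (j : Fin n), ∀ ℓ ∈ Finset.Icc 1 n, z j ≠ (ℓ : ℝ) ∧ z j ≠ -(ℓ : ℝ))
    (hpos1 : ∀ j : Fin n,
      0 ≤ (∏ ℓ ∈ Finset.Icc 1 n, ((ℓ : ℝ) ^ 2 - (z j) ^ 2)) /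
          ∏ ℓ ∈ Finset.univ.erase j, ((z ℓ) ^ 2 - (z j) ^ 2))
    (hpos2 : ∀ k : Fin n,
      0 ≤ (∏ ℓ ∈ Finset.univ, ((((k : ℕ) : ℝ) + 1) ^ 2 - (z ℓ) ^ 2)) /
          ∏ ℓ ∈ (Finset.Icc 1 n).erase ((k : ℕ) + 1),
            ((((k : ℕ) : ℝ) + 1) ^ 2 - (ℓ : ℝ) ^ 2))
    (U : Matrix (Fin n) (Fin n) ℝ)
    (hU : U = Matrix.of fun j k : Fin n =>
      Real.sqrt ((∏ ℓ ∈ Finset.Icc 1 n, ((ℓ : ℝ) ^ 2 - (z j) ^ 2)) /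
          ∏ ℓ ∈ Finset.univ.erase j, ((z ℓ) ^ 2 - (z j) ^ 2)) *
        (1 / ((z j) ^ 2 - (((k : ℕ) : ℝ) + 1) ^ 2)) *
        Real.sqrt ((∏ ℓ ∈ Finset.univ, ((((k : ℕ) : ℝ) + 1) ^ 2 - (z ℓ) ^ 2)) /
          ∏ ℓ ∈ (Finset.Icc 1 n).erase ((k : ℕ) + 1),
            ((((k : ℕ) : ℝ) + 1) ^ 2 - (ℓ : ℝ) ^ 2))) :
    U.transpose * U = 1 := by
  subst hU
  -- basic abbreviations and facts
  have hinja : Set.InjOn (fun j : Fin n => z j ^ 2) (Finset.univ : Finset (Fin n)) := by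
    intro i _ j _ h
    by_contra hne'
    exact hdistsq i j hne' h
  have hWne : ∀ j : Fin n, (∏ ℓ ∈ Finset.univ.erase j, (z j ^ 2 - z ℓ ^ 2)) ≠ 0 := by
    intro j
    rw [prod_ne_zero_iff]
    intro ℓ hℓ
    exact sub_ne_zero.mpr (hdistsq j ℓ (Ne.symm (mem_erase.mp hℓ).1))
  have hsub : ∀ (j : Fin n) (m : ℕ), m ∈ Finset.Icc 1 n → z j ^ 2 - ((m : ℝ)) ^ 2 ≠ 0 := by
    intro j m hm
    obtain ⟨h1, h2⟩ := havoid j m hm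
    have h3 : z j ^ 2 - ((m : ℝ)) ^ 2 = (z j - m) * (z j + m) := by ring
    rw [h3]
    exact mul_ne_zero (sub_ne_zero.mpr h1) (fun h => h2 (by linarith))
  have hsubnat : ∀ m K : ℕ, m ∈ Finset.Icc 1 n → m ≠ K →
      ((m : ℝ)) ^ 2 - ((K : ℝ)) ^ 2 ≠ 0 := by
    intro m K hm hmk
    have h1 : (1 : ℝ) ≤ (m : ℝ) := by exact_mod_cast (mem_Icc.mp hm).1
    have h2 : (0 : ℝ) ≤ (K : ℝ) := Nat.cast_nonneg K
    have h3 : (m : ℝ) ≠ (K : ℝ) := by exact_mod_cast hmk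
    have h4 : (m : ℝ) ^ 2 - (K : ℝ) ^ 2 = ((m : ℝ) - K) * ((m : ℝ) + K) := by ring
    rw [h4]
    exact mul_ne_zero (sub_ne_zero.mpr h3) (by nlinarith)
  have hKmem : ∀ k : Fin n, ((k : ℕ) + 1) ∈ Finset.Icc 1 n := fun k =>
    mem_Icc.mpr ⟨Nat.succ_le_succ (Nat.zero_le _), k.isLt⟩
  have hcast : ∀ k : Fin n, (((k : ℕ) + 1 : ℕ) : ℝ) = ((k : ℕ) : ℝ) + 1 := by
    intro k; push_cast; ring
  have hcardIcc : #(Finset.Icc 1 n) = n := by rw [Nat.card_Icc]; omega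
  have hcarderase : ∀ j : Fin n, #((Finset.univ : Finset (Fin n)).erase j) = n - 1 := by
    intro j; rw [card_erase_of_mem (mem_univ j), card_univ, Fintype.card_fin]
  set ε : ℝ := (-1 : ℝ) ^ (n - 1) with hε
  have hεpm : ε = 1 ∨ ε = -1 := by
    rcases Nat.even_or_odd (n - 1) with he | ho
    · exact Or.inl (he.neg_one_pow)
    · exact Or.inr (ho.neg_one_pow)
  have hDW : ∀ j : Fin n,
      (∏ ℓ ∈ Finset.univ.erase j, (z ℓ ^ 2 - z j ^ 2)) =
        ε * ∏ ℓ ∈ Finset.univ.erase j, (z j ^ 2 - z ℓ ^ 2) := by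
    intro j
    have h1 : ∀ ℓ ∈ Finset.univ.erase j, z ℓ ^ 2 - z j ^ 2 = -(z j ^ 2 - z ℓ ^ 2) :=
      fun ℓ _ => by ring
    rw [prod_congr rfl h1, prod_neg', hcarderase j, hε]
  -- entrywise
  ext k k'
  simp only [Matrix.mul_apply, Matrix.transpose_apply, Matrix.of_apply, Matrix.one_apply]
  set c : ℝ := ((k : ℕ) : ℝ) + 1 with hcdef
  set c' : ℝ := ((k' : ℕ) : ℝ) + 1 with hc'def
  set Bk : ℝ := (∏ ℓ ∈ Finset.univ, (c ^ 2 - (z ℓ) ^ 2)) /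
      ∏ ℓ ∈ (Finset.Icc 1 n).erase ((k : ℕ) + 1), (c ^ 2 - (ℓ : ℝ) ^ 2) with hBk
  set Bk' : ℝ := (∏ ℓ ∈ Finset.univ, (c' ^ 2 - (z ℓ) ^ 2)) /
      ∏ ℓ ∈ (Finset.Icc 1 n).erase ((k' : ℕ) + 1), (c' ^ 2 - (ℓ : ℝ) ^ 2) with hBk'
  have hterm : ∀ j : Fin n,
      (Real.sqrt ((∏ ℓ ∈ Finset.Icc 1 n, ((ℓ : ℝ) ^ 2 - (z j) ^ 2)) /
          ∏ ℓ ∈ Finset.univ.erase j, ((z ℓ) ^ 2 - (z j) ^ 2)) *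
        (1 / ((z j) ^ 2 - c ^ 2)) * Real.sqrt Bk) *
      (Real.sqrt ((∏ ℓ ∈ Finset.Icc 1 n, ((ℓ : ℝ) ^ 2 - (z j) ^ 2)) /
          ∏ ℓ ∈ Finset.univ.erase j, ((z ℓ) ^ 2 - (z j) ^ 2)) *
        (1 / ((z j) ^ 2 - c' ^ 2)) * Real.sqrt Bk')
      = (Real.sqrt Bk * Real.sqrt Bk') *
        ((∏ ℓ ∈ Finset.Icc 1 n, ((ℓ : ℝ) ^ 2 - (z j) ^ 2)) /
          (∏ ℓ ∈ Finset.univ.erase j, ((z ℓ) ^ 2 - (z j) ^ 2)) *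
          (((z j) ^ 2 - c ^ 2)⁻¹ * ((z j) ^ 2 - c' ^ 2)⁻¹)) := by
    intro j
    have h2 := Real.mul_self_sqrt (hpos1 j)
    calc _ = (Real.sqrt ((∏ ℓ ∈ Finset.Icc 1 n, ((ℓ : ℝ) ^ 2 - (z j) ^ 2)) /
          ∏ ℓ ∈ Finset.univ.erase j, ((z ℓ) ^ 2 - (z j) ^ 2)) *
        Real.sqrt ((∏ ℓ ∈ Finset.Icc 1 n, ((ℓ : ℝ) ^ 2 - (z j) ^ 2)) /
          ∏ ℓ ∈ Finset.univ.erase j, ((z ℓ) ^ 2 - (z j) ^ 2))) *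
        (Real.sqrt Bk * Real.sqrt Bk') *
        ((1 / ((z j) ^ 2 - c ^ 2)) * (1 / ((z j) ^ 2 - c' ^ 2))) := by ring
    _ = _ := by rw [h2, one_div, one_div]; ring
  rw [Finset.sum_congr rfl (fun j _ => hterm j), ← mul_sum]
  by_cases hkk : k = k'
  · -- diagonal case
    subst hkk
    rw [if_pos rfl]
    have hcc' : c' = c := by rw [hc'def, hcdef]
    have hBB : Bk' = Bk := by rw [hBk', hBk, hcc']
    rw [hcc', hBB]
    have hBkpos : 0 ≤ Bk := by
      rw [hBk]
      have h0 := hpos2 k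
      rwa [← hcdef] at h0
    rw [Real.mul_self_sqrt hBkpos]
    -- nonvanishing facts
    have hx : ∀ j : Fin n, z j ^ 2 - c ^ 2 ≠ 0 := by
      intro j
      have h0 := hsub j ((k : ℕ) + 1) (hKmem k)
      rwa [hcast k, ← hcdef] at h0
    have hQ0 : (∏ ℓ ∈ Finset.univ, (c ^ 2 - z ℓ ^ 2)) ≠ 0 := by
      rw [prod_ne_zero_iff]
      intro ℓ _ h
      exact hx ℓ (by linarith)
    -- interpolation nodes
    set v : Fin (n + 1) → ℝ := Fin.snoc (fun j => z j ^ 2) (c ^ 2) with hv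
    have hvc : ∀ j : Fin n, v (Fin.castSucc j) = z j ^ 2 := fun j => by
      rw [hv, Fin.snoc_castSucc]
    have hvl : v (Fin.last n) = c ^ 2 := by rw [hv, Fin.snoc_last]
    have hvinj : Set.InjOn v (Finset.univ : Finset (Fin (n + 1))) := by
      intro i _ i' _ h
      rcases Fin.eq_castSucc_or_eq_last i with ⟨p, rfl⟩ | rfl <;>
        rcases Fin.eq_castSucc_or_eq_last i' with ⟨q, rfl⟩ | rfl
      · rw [hvc, hvc] at h
        by_contra hne'
        exact hdistsq p q (fun hpq => hne' (congrArg Fin.castSucc hpq)) h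
      · rw [hvc, hvl] at h
        exact absurd (sub_eq_zero.mpr h) (hx p)
      · rw [hvl, hvc] at h
        exact absurd (sub_eq_zero.mpr h.symm) (hx q)
      · rfl
    set S : Polynomial ℝ :=
      ∏ m ∈ (Finset.Icc 1 n).erase ((k : ℕ) + 1), (Polynomial.C ((m : ℝ) ^ 2) - Polynomial.X)
      with hS
    have hevalS : ∀ x : ℝ,
        S.eval x = ∏ m ∈ (Finset.Icc 1 n).erase ((k : ℕ) + 1), ((m : ℝ) ^ 2 - x) := by
      intro x
      rw [hS, Polynomial.eval_prod]
      exact prod_congr rfl fun m _ => by simp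
    have hT0 : S.eval (c ^ 2) ≠ 0 := by
      rw [hevalS, prod_ne_zero_iff]
      intro m hm
      have hm2 := mem_erase.mp hm
      have h0 := hsubnat m ((k : ℕ) + 1) hm2.2 hm2.1
      rwa [hcast k, ← hcdef] at h0
    have hcard2 : #((Finset.Icc 1 n).erase ((k : ℕ) + 1)) = n - 1 := by
      rw [card_erase_of_mem (hKmem k), hcardIcc]
    have hdegS : S.degree < (#(Finset.univ : Finset (Fin (n + 1))) - 1 : ℕ) := by
      have h1 : S.natDegree ≤ n - 1 := by
        refine le_trans (Polynomial.natDegree_prod_le _ _) ?_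
        rw [← hcard2, card_eq_sum_ones]
        refine Finset.sum_le_sum fun m _ => ?_
        have h2 : (Polynomial.C ((m : ℝ) ^ 2) - Polynomial.X)
            = -(Polynomial.X - Polynomial.C ((m : ℝ) ^ 2)) := by ring
        rw [h2, Polynomial.natDegree_neg, Polynomial.natDegree_X_sub_C]
      have h2 : #(Finset.univ : Finset (Fin (n + 1))) - 1 = n := by simp
      rw [h2]
      calc S.degree ≤ (S.natDegree : WithBot ℕ) := Polynomial.degree_le_natDegree
        _ < (n : WithBot ℕ) := by
            exact_mod_cast lt_of_le_of_lt h1 (Nat.sub_lt hn one_pos)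
    have H := key_sum Finset.univ v hvinj S hdegS
    rw [Fin.sum_univ_castSucc] at H
    have Hprod : ∀ j : Fin n,
        ∏ ℓ ∈ (Finset.univ : Finset (Fin (n + 1))).erase (Fin.castSucc j),
            (v (Fin.castSucc j) - v ℓ)
          = (∏ ℓ ∈ Finset.univ.erase j, (z j ^ 2 - z ℓ ^ 2)) * (z j ^ 2 - c ^ 2) := by
      intro j
      rw [prod_erase_castSucc j (fun ℓ => v (Fin.castSucc j) - v ℓ)]
      simp only [hvc, hvl]
    have Hlast :
        ∏ ℓ ∈ (Finset.univ : Finset (Fin (n + 1))).erase (Fin.last n),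
            (v (Fin.last n) - v ℓ)
          = ∏ ℓ ∈ Finset.univ, (c ^ 2 - z ℓ ^ 2) := by
      rw [prod_erase_last (fun ℓ => v (Fin.last n) - v ℓ)]
      simp only [hvc, hvl]
    have e1 : ∀ j : Fin n,
        S.eval (v (Fin.castSucc j)) *
            (∏ ℓ ∈ (Finset.univ : Finset (Fin (n + 1))).erase (Fin.castSucc j),
              (v (Fin.castSucc j) - v ℓ))⁻¹
          = S.eval (z j ^ 2) *
            ((∏ ℓ ∈ Finset.univ.erase j, (z j ^ 2 - z ℓ ^ 2)) * (z j ^ 2 - c ^ 2))⁻¹ :=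
      fun j => by rw [Hprod j, hvc]
    rw [Finset.sum_congr rfl (fun j _ => e1 j), Hlast, hvl] at H
    have H2 : ∑ j : Fin n, S.eval (z j ^ 2) *
          ((∏ ℓ ∈ Finset.univ.erase j, (z j ^ 2 - z ℓ ^ 2)) * (z j ^ 2 - c ^ 2))⁻¹
        = -(S.eval (c ^ 2) * (∏ ℓ ∈ Finset.univ, (c ^ 2 - z ℓ ^ 2))⁻¹) :=
      eq_neg_of_add_eq_zero_left H
    have hNsplit : ∀ j : Fin n,
        (∏ ℓ ∈ Finset.Icc 1 n, ((ℓ : ℝ) ^ 2 - z j ^ 2))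
          = (c ^ 2 - z j ^ 2) * S.eval (z j ^ 2) := by
      intro j
      rw [hevalS, ← Finset.mul_prod_erase (Finset.Icc 1 n)
        (fun m => ((m : ℝ)) ^ 2 - z j ^ 2) (hKmem k)]
      congr 1
      rw [hcast k, ← hcdef]
    have hterm2 : ∀ j : Fin n,
        (∏ ℓ ∈ Finset.Icc 1 n, ((ℓ : ℝ) ^ 2 - z j ^ 2)) /
            (∏ ℓ ∈ Finset.univ.erase j, (z ℓ ^ 2 - z j ^ 2)) *
            ((z j ^ 2 - c ^ 2)⁻¹ * (z j ^ 2 - c ^ 2)⁻¹)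
          = (-ε) * (S.eval (z j ^ 2) *
              ((∏ ℓ ∈ Finset.univ.erase j, (z j ^ 2 - z ℓ ^ 2)) * (z j ^ 2 - c ^ 2))⁻¹) := by
      intro j
      rw [hNsplit j, hDW j]
      exact alg1 ε _ _ _ _ hεpm (hWne j) (by ring) (hx j)
    rw [Finset.sum_congr rfl (fun j _ => hterm2 j), ← mul_sum, H2]
    have hE : (∏ ℓ ∈ (Finset.Icc 1 n).erase ((k : ℕ) + 1), (c ^ 2 - (ℓ : ℝ) ^ 2))
        = ε * S.eval (c ^ 2) := by
      rw [hevalS]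
      have h1 : ∀ m ∈ (Finset.Icc 1 n).erase ((k : ℕ) + 1),
          c ^ 2 - (m : ℝ) ^ 2 = -((m : ℝ) ^ 2 - c ^ 2) := fun m _ => by ring
      rw [prod_congr rfl h1, prod_neg', hcard2, hε]
    calc Bk * (-ε * -(S.eval (c ^ 2) * (∏ ℓ ∈ Finset.univ, (c ^ 2 - z ℓ ^ 2))⁻¹))
        = Bk * (ε * (S.eval (c ^ 2) * (∏ ℓ ∈ Finset.univ, (c ^ 2 - z ℓ ^ 2))⁻¹)) := by ring
      _ = 1 := by
          rw [hBk]
          exact alg3 ε _ _ _ hεpm hQ0 hT0 hE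
  · -- off-diagonal case
    rw [if_neg hkk]
    have hvalne : (k : ℕ) ≠ (k' : ℕ) := fun h => hkk (Fin.ext h)
    have hn2 : 2 ≤ n := by
      have h1 := k.isLt
      have h2 := k'.isLt
      omega
    have hx : ∀ j : Fin n, z j ^ 2 - c ^ 2 ≠ 0 := by
      intro j
      have h0 := hsub j ((k : ℕ) + 1) (hKmem k)
      rwa [hcast k, ← hcdef] at h0
    have hx' : ∀ j : Fin n, z j ^ 2 - c' ^ 2 ≠ 0 := by
      intro j
      have h0 := hsub j ((k' : ℕ) + 1) (hKmem k')
      rwa [hcast k', ← hc'def] at h0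
    have hK'mem : ((k' : ℕ) + 1) ∈ (Finset.Icc 1 n).erase ((k : ℕ) + 1) :=
      mem_erase.mpr ⟨fun h => hvalne (by omega), hKmem k'⟩
    set S : Polynomial ℝ :=
      ∏ m ∈ ((Finset.Icc 1 n).erase ((k : ℕ) + 1)).erase ((k' : ℕ) + 1),
        (Polynomial.C ((m : ℝ) ^ 2) - Polynomial.X) with hS
    have hevalS : ∀ x : ℝ,
        S.eval x = ∏ m ∈ ((Finset.Icc 1 n).erase ((k : ℕ) + 1)).erase ((k' : ℕ) + 1),
          ((m : ℝ) ^ 2 - x) := by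
      intro x
      rw [hS, Polynomial.eval_prod]
      exact prod_congr rfl fun m _ => by simp
    have hcard2 : #(((Finset.Icc 1 n).erase ((k : ℕ) + 1)).erase ((k' : ℕ) + 1)) = n - 2 := by
      rw [card_erase_of_mem hK'mem, card_erase_of_mem (hKmem k), hcardIcc]
      omega
    have hdegS : S.degree < (#(Finset.univ : Finset (Fin n)) - 1 : ℕ) := by
      have h1 : S.natDegree ≤ n - 2 := by
        refine le_trans (Polynomial.natDegree_prod_le _ _) ?_
        rw [← hcard2, card_eq_sum_ones]
        refine Finset.sum_le_sum fun m _ => ?_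
        have h2 : (Polynomial.C ((m : ℝ) ^ 2) - Polynomial.X)
            = -(Polynomial.X - Polynomial.C ((m : ℝ) ^ 2)) := by ring
        rw [h2, Polynomial.natDegree_neg, Polynomial.natDegree_X_sub_C]
      have h2 : #(Finset.univ : Finset (Fin n)) - 1 = n - 1 := by simp
      rw [h2]
      calc S.degree ≤ (S.natDegree : WithBot ℕ) := Polynomial.degree_le_natDegree
        _ < ((n - 1 : ℕ) : WithBot ℕ) := by
            exact_mod_cast lt_of_le_of_lt h1 (by omega)
    have H : ∑ j : Fin n, S.eval (z j ^ 2) *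
        (∏ ℓ ∈ Finset.univ.erase j, (z j ^ 2 - z ℓ ^ 2))⁻¹ = 0 := by
      simpa using key_sum Finset.univ (fun j => z j ^ 2) hinja S hdegS
    have hNsplit : ∀ j : Fin n,
        (∏ ℓ ∈ Finset.Icc 1 n, ((ℓ : ℝ) ^ 2 - z j ^ 2))
          = (c ^ 2 - z j ^ 2) * ((c' ^ 2 - z j ^ 2) * S.eval (z j ^ 2)) := by
      intro j
      rw [hevalS, ← Finset.mul_prod_erase (Finset.Icc 1 n)
        (fun m => ((m : ℝ)) ^ 2 - z j ^ 2) (hKmem k),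
        ← Finset.mul_prod_erase ((Finset.Icc 1 n).erase ((k : ℕ) + 1))
        (fun m => ((m : ℝ)) ^ 2 - z j ^ 2) hK'mem]
      rw [hcast k, ← hcdef, hcast k', ← hc'def]
    have hterm2 : ∀ j : Fin n,
        (∏ ℓ ∈ Finset.Icc 1 n, ((ℓ : ℝ) ^ 2 - z j ^ 2)) /
            (∏ ℓ ∈ Finset.univ.erase j, (z ℓ ^ 2 - z j ^ 2)) *
            ((z j ^ 2 - c ^ 2)⁻¹ * (z j ^ 2 - c' ^ 2)⁻¹)
          = ε * (S.eval (z j ^ 2) *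
              (∏ ℓ ∈ Finset.univ.erase j, (z j ^ 2 - z ℓ ^ 2))⁻¹) := by
      intro j
      rw [hNsplit j, hDW j]
      exact alg2 ε _ _ _ _ _ _ hεpm (hWne j) (by ring) (hx j) (by ring) (hx' j)
    rw [Finset.sum_congr rfl (fun j _ => hterm2 j), ← mul_sum, H, mul_zero, mul_zero]
end

section
/- Let n ≥ 1 and suppose z_1,…,z_n : I → ℝ are twice differentiable on an open interval I, pairwise distinct with pairwise distinct squares, avoid ±1,…,±n, and satisfy the first-order system z_ℓ′ = ∏_{j=1}^n (j² − z_ℓ²)/∏_{j≠ℓ} (z_j² − z_ℓ²) for all ℓ. Then they satisfy the Ruijsenaars–Schneider-type second-order system z_ℓ″ + 2 z_ℓ z_ℓ′ = ∑_{j≠ℓ} 2 z_ℓ′ z_j′/(z_ℓ − z_j) for all ℓ. -/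
/-!
Write `s_j = z_j²` and `P(t) = ∏_{m=1}^n (m² - t)`, so that the first-order system reads
`z_ℓ' = F_ℓ(s) := P(s_ℓ) / ∏_{k ≠ ℓ} (s_k - s_ℓ)`. As `P(t)` and `∏_k (s_k - t)` have the same
degree and leading coefficient, Lagrange interpolation of their difference at the nodes `s_k` gives
`P(t) = ∏_k (s_k - t) + ∑_j F_j ∏_{k ≠ j} (s_k - t)`. Dividing by `∏_{k ≠ ℓ} (s_k - t)` and
differentiating at `t = s_ℓ` once logarithmically and once term by term yields
`F_ℓ (∑_m 1/(m² - s_ℓ) - ∑_{k ≠ ℓ} 1/(s_k - s_ℓ)) = 1 + ∑_{k ≠ ℓ} F_k/(s_k - s_ℓ)`.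
Differentiating `z_ℓ' = F_ℓ(s)` logarithmically and substituting this identity gives the
second-order system, via `(z_ℓ + z_j) / (z_j² - z_ℓ²) = 1 / (z_j - z_ℓ)`.
-/

open Finset

open Polynomial in
theorem Lagrange.eq_nodal_add_interpolate {F ι : Type*} [Field F] [DecidableEq ι]
    {s : Finset ι} {v : ι → F} (hvs : Set.InjOn v s) {p : F[X]} (hp : p.Monic)
    (hdeg : p.natDegree = #s) :
    p = nodal s v + interpolate s v fun i => p.eval (v i) := by
  have hpdeg : p.degree = #s := by rw [degree_eq_natDegree hp.ne_zero, hdeg]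
  have hlt : (p - nodal s v).degree < #s := hpdeg ▸
    degree_sub_lt_left (by rw [hpdeg, degree_nodal]) hp.ne_zero (by rw [hp, nodal_monic])
  rw [← sub_eq_iff_eq_add', eq_interpolate hvs hlt]
  refine interpolate_eq_of_values_eq_on _ _ fun i hi => ?_
  simp [eval_nodal_at_node hi]

theorem HasDerivAt.finsetProd_div_finsetProd {𝕜 𝕜' ι κ : Type*} [NontriviallyNormedField 𝕜]
    [NontriviallyNormedField 𝕜'] [NormedAlgebra 𝕜 𝕜'] {s : Finset ι} {u : Finset κ}
    {f : ι → 𝕜 → 𝕜'} {g : κ → 𝕜 → 𝕜'} {f' : ι → 𝕜'} {g' : κ → 𝕜'} {x : 𝕜}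
    (hf : ∀ i ∈ s, HasDerivAt (f i) (f' i) x) (hg : ∀ j ∈ u, HasDerivAt (g j) (g' j) x)
    (hf0 : ∀ i ∈ s, f i x ≠ 0) (hg0 : ∀ j ∈ u, g j x ≠ 0) :
    HasDerivAt (fun t => (∏ i ∈ s, f i t) / ∏ j ∈ u, g j t)
      ((∏ i ∈ s, f i x) / (∏ j ∈ u, g j x) *
        (∑ i ∈ s, f' i / f i x - ∑ j ∈ u, g' j / g j x)) x := by
  have hdf : ∀ i ∈ s, DifferentiableAt 𝕜 (f i) x := fun i hi => (hf i hi).differentiableAt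
  have hdg : ∀ j ∈ u, DifferentiableAt 𝕜 (g j) x := fun j hj => (hg j hj).differentiableAt
  have hF0 : ∏ i ∈ s, f i x ≠ 0 := prod_ne_zero_iff.mpr hf0
  have hG0 : ∏ j ∈ u, g j x ≠ 0 := prod_ne_zero_iff.mpr hg0
  have hlog : logDeriv (fun t => (∏ i ∈ s, f i t) / ∏ j ∈ u, g j t) x
      = ∑ i ∈ s, f' i / f i x - ∑ j ∈ u, g' j / g j x := by
    rw [logDeriv_div x hF0 hG0 (.fun_finsetProd hdf) (.fun_finsetProd hdg),
      logDeriv_prod hf0 hdf, logDeriv_prod hg0 hdg]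
    congr 1
    · exact sum_congr rfl fun i hi => by rw [logDeriv_apply, (hf i hi).deriv]
    · exact sum_congr rfl fun j hj => by rw [logDeriv_apply, (hg j hj).deriv]
  rw [← hlog, logDeriv_apply, mul_div_cancel₀ _ (div_ne_zero hF0 hG0)]
  exact ((DifferentiableAt.fun_finsetProd hdf).div (.fun_finsetProd hdg) hG0).hasDerivAt

section PartialFractions

variable {ι κ : Type*} [DecidableEq ι]

/-- The coefficient of `1 / (s j - t)` in the partial fraction expansion of
`∏ m ∈ T, (r m - t) / ∏ k ∈ S, (s k - t)`. -/
def partialFractionCoeff {F : Type*} [Field F] (T : Finset κ) (r : κ → F) (S : Finset ι)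
    (s : ι → F) (j : ι) : F :=
  (∏ m ∈ T, (r m - s j)) / ∏ k ∈ S.erase j, (s k - s j)

section Field

variable {F : Type*} [Field F] {T : Finset κ} {r : κ → F} {S : Finset ι} {s : ι → F}

open Polynomial in
theorem prod_sub_eq_prod_sub_add_sum (hs : Set.InjOn s S) (hcard : #T = #S) (t : F) :
    ∏ m ∈ T, (r m - t) = ∏ k ∈ S, (s k - t) +
      ∑ j ∈ S, partialFractionCoeff T r S s j * ∏ k ∈ S.erase j, (s k - t) := by
  have hneg : Set.InjOn (-s) S := fun i hi j hj h => hs hi hj (neg_inj.mp h)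
  -- interpolate `∏ m ∈ T, (X + r m)` at the nodes `-s k`, and evaluate at `-t`
  have key := congrArg (eval (-t)) <| Lagrange.eq_nodal_add_interpolate hneg
    (Lagrange.nodal_monic (s := T) (v := -r)) (by rw [Lagrange.natDegree_nodal, hcard])
  simp only [Lagrange.eval_nodal, eval_add, Lagrange.interpolate_apply, eval_finsetSum,
    eval_mul, eval_C, Lagrange.basis, Lagrange.basisDivisor, eval_prod, eval_sub, eval_X,
    Pi.neg_apply, sub_neg_eq_add, neg_add_eq_sub, prod_mul_distrib, prod_inv_distrib] at key
  rw [key]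
  simp only [partialFractionCoeff, div_eq_mul_inv, mul_assoc]

theorem prod_sub_div_prod_erase_sub_eq {ℓ : ι} (hs : Set.InjOn s S) (hcard : #T = #S)
    (hℓ : ℓ ∈ S) {t : F} (ht : ∀ k ∈ S.erase ℓ, s k ≠ t) :
    (∏ m ∈ T, (r m - t)) / ∏ k ∈ S.erase ℓ, (s k - t) =
      s ℓ - t + partialFractionCoeff T r S s ℓ +
        ∑ j ∈ S.erase ℓ, partialFractionCoeff T r S s j * ((s ℓ - t) / (s j - t)) := by
  have hN : ∏ k ∈ S.erase ℓ, (s k - t) ≠ 0 :=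
    prod_ne_zero_iff.mpr fun k hk => sub_ne_zero.mpr (ht k hk)
  have hprod : ∀ j ∈ S.erase ℓ, ∏ k ∈ S.erase j, (s k - t) =
      (s ℓ - t) / (s j - t) * ∏ k ∈ S.erase ℓ, (s k - t) := by
    intro j hj
    rw [← mul_prod_erase (S.erase j) _ (mem_erase.mpr ⟨Ne.symm (ne_of_mem_erase hj), hℓ⟩),
      ← mul_prod_erase (S.erase ℓ) _ hj, erase_right_comm,
      ← mul_assoc, div_mul_cancel₀ _ (sub_ne_zero.mpr (ht j hj))]
  rw [div_eq_iff hN, prod_sub_eq_prod_sub_add_sum hs hcard t, ← mul_prod_erase S _ hℓ,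
    ← add_sum_erase S _ hℓ, sum_congr rfl fun j hj => by rw [hprod j hj, ← mul_assoc],
    ← sum_mul]
  ring

end Field

variable {𝕜 : Type*} [NontriviallyNormedField 𝕜] {T : Finset κ} {r : κ → 𝕜} {S : Finset ι}
  {ℓ : ι}

open Filter Topology in
theorem partialFractionCoeff_mul_sum_inv_sub_sum_inv {s : ι → 𝕜} (hs : Set.InjOn s S)
    (hcard : #T = #S) (hℓ : ℓ ∈ S) (hr : ∀ m ∈ T, r m ≠ s ℓ) :
    partialFractionCoeff T r S s ℓ *
        (∑ m ∈ T, (r m - s ℓ)⁻¹ - ∑ k ∈ S.erase ℓ, (s k - s ℓ)⁻¹) =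
      1 + ∑ j ∈ S.erase ℓ, partialFractionCoeff T r S s j / (s j - s ℓ) := by
  have hne : ∀ k ∈ S.erase ℓ, s k ≠ s ℓ := fun k hk =>
    hs.ne (mem_erase.mp hk).2 hℓ (ne_of_mem_erase hk)
  have hsub : ∀ a : 𝕜, HasDerivAt (fun t => a - t) (-1) (s ℓ) := fun a =>
    (hasDerivAt_id _).const_sub a
  have hlog := HasDerivAt.finsetProd_div_finsetProd (fun m _ => hsub (r m))
    (fun k _ => hsub (s k)) (fun m hm => sub_ne_zero.mpr (hr m hm))
    (fun k hk => sub_ne_zero.mpr (hne k hk))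
  have hnear : ∀ᶠ t in 𝓝 (s ℓ), ∀ k ∈ S.erase ℓ, s k ≠ t :=
    (eventually_all_finset _).mpr fun k hk =>
      (eventually_ne_nhds (hne k hk).symm).mono fun t ht => Ne.symm ht
  have hexpansion := ((hsub (s ℓ)).add_const (partialFractionCoeff T r S s ℓ)).add
    (HasDerivAt.fun_sum fun j hj => ((hsub (s ℓ)).div (hsub (s j))
      (sub_ne_zero.mpr (hne j hj))).const_mul (partialFractionCoeff T r S s j))
  have hinterp := hexpansion.congr_of_eventuallyEq
    (hnear.mono fun t ht => prod_sub_div_prod_erase_sub_eq hs hcard hℓ ht)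
  have hterm : ∀ j ∈ S.erase ℓ, partialFractionCoeff T r S s j *
      ((-1 * (s j - s ℓ) - (s ℓ - s ℓ) * -1) / (s j - s ℓ) ^ 2) =
        -(partialFractionCoeff T r S s j / (s j - s ℓ)) := fun j hj => by
    field_simp [sub_ne_zero.mpr (hne j hj)]
    ring
  have key := hlog.unique hinterp
  simp only [sum_congr rfl hterm, neg_div, one_div, sum_neg_distrib] at key
  change partialFractionCoeff T r S s ℓ * _ = _ at key
  linear_combination -key

theorem hasDerivAt_partialFractionCoeff {s : ι → 𝕜 → 𝕜} {s' : ι → 𝕜} {x : 𝕜}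
    (hs : ∀ j ∈ S, HasDerivAt (s j) (s' j) x) (hinj : Set.InjOn (fun j => s j x) S)
    (hcard : #T = #S) (hℓ : ℓ ∈ S) (hr : ∀ m ∈ T, r m ≠ s ℓ x) :
    HasDerivAt (fun y => partialFractionCoeff T r S (fun j => s j y) ℓ)
      (-s' ℓ * (1 + ∑ j ∈ S.erase ℓ,
          partialFractionCoeff T r S (fun k => s k x) j / (s j x - s ℓ x)) -
        partialFractionCoeff T r S (fun k => s k x) ℓ *
          ∑ j ∈ S.erase ℓ, s' j / (s j x - s ℓ x)) x := by
  have hne : ∀ k ∈ S.erase ℓ, s k x ≠ s ℓ x := fun k hk =>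
    hinj.ne (mem_erase.mp hk).2 hℓ (ne_of_mem_erase hk)
  have hlog := HasDerivAt.finsetProd_div_finsetProd
    (fun m _ => (hs ℓ hℓ).const_sub (r m))
    (fun k hk => (hs k (mem_erase.mp hk).2).sub (hs ℓ hℓ))
    (fun m hm => sub_ne_zero.mpr (hr m hm)) (fun k hk => sub_ne_zero.mpr (hne k hk))
  have hcoeff := partialFractionCoeff_mul_sum_inv_sub_sum_inv hinj hcard hℓ hr
  refine hlog.congr_deriv ?_
  change partialFractionCoeff T r S (fun k => s k x) ℓ * _ = _
  simp only [div_eq_mul_inv, sub_mul, sum_sub_distrib, ← mul_sum] at hcoeff ⊢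
  linear_combination -s' ℓ * hcoeff

end PartialFractions

theorem stmt16_general (n : ℕ) (a b : ℝ) (z : Fin n → ℝ → ℝ)
    (hdiff : ∀ j : Fin n, ∀ x ∈ Set.Ioo a b,
      DifferentiableAt ℝ (z j) x ∧ DifferentiableAt ℝ (deriv (z j)) x)
    (hdistsq : ∀ x ∈ Set.Ioo a b, ∀ j k : Fin n, j ≠ k → (z j x) ^ 2 ≠ (z k x) ^ 2)
    (havoid : ∀ x ∈ Set.Ioo a b, ∀ j : Fin n, ∀ ℓ ∈ Finset.Icc 1 n,
      z j x ≠ (ℓ : ℝ) ∧ z j x ≠ -(ℓ : ℝ))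
    (hode : ∀ x ∈ Set.Ioo a b, ∀ ℓ : Fin n,
      deriv (z ℓ) x = (∏ j ∈ Finset.Icc 1 n, ((j : ℝ) ^ 2 - (z ℓ x) ^ 2)) /
        ∏ j ∈ Finset.univ.erase ℓ, ((z j x) ^ 2 - (z ℓ x) ^ 2)) :
    ∀ x ∈ Set.Ioo a b, ∀ ℓ : Fin n,
      deriv (deriv (z ℓ)) x + 2 * z ℓ x * deriv (z ℓ) x
        = ∑ j ∈ Finset.univ.erase ℓ,
            2 * deriv (z ℓ) x * deriv (z j) x / (z ℓ x - z j x) := by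
  intro x hx ℓ
  have hvel : ∀ y ∈ Set.Ioo a b, ∀ j, deriv (z j) y =
      partialFractionCoeff (Icc 1 n) (fun m : ℕ => (m : ℝ) ^ 2) univ (fun k => z k y ^ 2) j :=
    hode
  have hsq : ∀ j, HasDerivAt (fun y => z j y ^ 2) (2 * z j x * deriv (z j) x) x := fun j => by
    simpa using (hdiff j x hx).1.hasDerivAt.fun_pow 2
  have hroots : ∀ m ∈ Icc 1 n, (m : ℝ) ^ 2 ≠ z ℓ x ^ 2 := fun m hm h =>
    (sq_eq_sq_iff_eq_or_eq_neg.mp h.symm).elim (havoid x hx ℓ m hm).1 (havoid x hx ℓ m hm).2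
  have hsecond := (hasDerivAt_partialFractionCoeff (fun j _ => hsq j)
    (fun j _ k _ h => by_contra fun hjk => hdistsq x hx j k hjk h) (by simp) (mem_univ ℓ)
    hroots).congr_of_eventuallyEq
    (Filter.eventually_of_mem (isOpen_Ioo.mem_nhds hx) fun y hy => hvel y hy ℓ)
  rw [hsecond.deriv]
  simp only [← hvel x hx]
  have hterm : ∀ j ∈ univ.erase ℓ, 2 * deriv (z ℓ) x * deriv (z j) x / (z ℓ x - z j x) =
      -(2 * z ℓ x * deriv (z ℓ) x) * (deriv (z j) x / (z j x ^ 2 - z ℓ x ^ 2)) -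
        deriv (z ℓ) x * (2 * z j x * deriv (z j) x / (z j x ^ 2 - z ℓ x ^ 2)) := by
    intro j hj
    have hne := hdistsq x hx j ℓ (ne_of_mem_erase hj)
    have hsub : z ℓ x - z j x ≠ 0 := fun h => hne (by rw [sub_eq_zero.mp h])
    have hadd : z j x + z ℓ x ≠ 0 := fun h => hne (by rw [eq_neg_of_add_eq_zero_left h, neg_sq])
    rw [show z j x ^ 2 - z ℓ x ^ 2 = -((z ℓ x - z j x) * (z j x + z ℓ x)) by ring]
    field_simp
    ring
  rw [sum_congr rfl hterm, sum_sub_distrib, ← mul_sum, ← mul_sum]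
  ring

/-- twice-differentiable functions `z_1,…,z_n` on an open interval, pairwise
distinct with pairwise distinct squares and avoiding `±1,…,±n`, satisfying the first-order
system `z_ℓ′ = ∏_j (j² − z_ℓ²)/∏_{j≠ℓ}(z_j² − z_ℓ²)`, also satisfy the Ruijsenaars–Schneider
second-order system `z_ℓ″ + 2 z_ℓ z_ℓ′ = ∑_{j≠ℓ} 2 z_ℓ′ z_j′/(z_ℓ − z_j)`. -/
theorem stmt16 (n : ℕ) (hn : 1 ≤ n) (a b : ℝ) (hab : a < b) (z : Fin n → ℝ → ℝ)
    (hdiff : ∀ j : Fin n, ∀ x ∈ Set.Ioo a b,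
      DifferentiableAt ℝ (z j) x ∧ DifferentiableAt ℝ (deriv (z j)) x)
    (hdist : ∀ x ∈ Set.Ioo a b, ∀ j k : Fin n, j ≠ k → z j x ≠ z k x)
    (hdistsq : ∀ x ∈ Set.Ioo a b, ∀ j k : Fin n, j ≠ k → (z j x) ^ 2 ≠ (z k x) ^ 2)
    (havoid : ∀ x ∈ Set.Ioo a b, ∀ j : Fin n, ∀ ℓ ∈ Finset.Icc 1 n,
      z j x ≠ (ℓ : ℝ) ∧ z j x ≠ -(ℓ : ℝ))
    (hode : ∀ x ∈ Set.Ioo a b, ∀ ℓ : Fin n,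
      deriv (z ℓ) x = (∏ j ∈ Finset.Icc 1 n, ((j : ℝ) ^ 2 - (z ℓ x) ^ 2)) /
        ∏ j ∈ Finset.univ.erase ℓ, ((z j x) ^ 2 - (z ℓ x) ^ 2)) :
    ∀ x ∈ Set.Ioo a b, ∀ ℓ : Fin n,
      deriv (deriv (z ℓ)) x + 2 * z ℓ x * deriv (z ℓ) x
        = ∑ j ∈ Finset.univ.erase ℓ,
            2 * deriv (z ℓ) x * deriv (z j) x / (z ℓ x - z j x) :=
  stmt16_general n a b z hdiff hdistsq havoid hode
end
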